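/- arXiv:1902.02044 — 6 statements merged into one kernel-verified Lean document; each statement's English description precedes it below -/
import Mathlib

section
/- Let n ≤ m be positive integers, let A be a real n×n matrix, and let B be a real n×m matrix such that every row of B sums to r and every column of B sums to 2. For real numbers t1, t2, t3, form the (n+m)×(n+m) block matrix M = [[A, B],[Bᵀ, t1·I_m + t2·J_m + t3·BᵀB]]. Then, as polynomials in x, det(x·I_{n+m} − M) = (x − t1)^{m−n} · det( ((x − t1)·I_n − t3·B·Bᵀ − (t2·r/2)·J_n)·(x·I_n − A) − B·Bᵀ ). -/
/-!
With column sums `c`, the lower right block satisfies `t2 J + t3 BᵀB = Wᵀ B` for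
`W = (t2 / c) J + t3 B`, so `M - t1 I` factors as `C D` through a space of dimension `2n`.
Sylvester's identity `det (u I - C D) = u ^ (m - n) det (u I - D C)` with `u = x - t1` then
reduces the problem to the `2n × 2n` matrix `u I - D C = [[x I - A, -1], [-B Bᵀ, S]]`, where
row sums `r` turn `B Wᵀ` into `(t2 r / c) J + t3 B Bᵀ`. Its off-diagonal block `-1` commutes
with everything, so its determinant is `det (S (x I - A) - B Bᵀ)`.
-/

open Matrix Polynomial

namespace Matrix

theorem mul_of_one_eq_smul_of_row_sums {p q l R : Type*} [Fintype q] [NonAssocSemiring R]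
    {B : Matrix p q R} {r : R} (hrow : ∀ i, ∑ j, B i j = r) :
    B * (of fun _ _ => 1 : Matrix q l R) = r • of fun _ _ => 1 := by
  ext i k
  simp [mul_apply, hrow]

theorem of_one_mul_eq_smul_of_col_sums {p q l R : Type*} [Fintype p] [NonAssocSemiring R]
    {B : Matrix p q R} {c : R} (hcol : ∀ j, ∑ i, B i j = c) :
    (of fun _ _ => 1 : Matrix l p R) * B = c • of fun _ _ => 1 := by
  ext k j
  simp [mul_apply, hcol]

variable {p q R : Type*} [Fintype p] [Fintype q] [DecidableEq p] [DecidableEq q]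

theorem det_smul_one_sub_mul_comm_of_le [CommRing R] (C : Matrix p q R) (D : Matrix q p R)
    (h : Fintype.card q ≤ Fintype.card p) (t : R) :
    (t • (1 : Matrix p p R) - C * D).det =
      t ^ (Fintype.card p - Fintype.card q) * (t • (1 : Matrix q q R) - D * C).det := by
  simpa [eval_charpoly, smul_one_eq_diagonal] using
    congrArg (eval t) (charpoly_mul_comm_of_le C D h)

theorem det_fromBlocks_neg_one₁₂ [CommRing R] (A C D : Matrix p p R) :
    (fromBlocks A (-1) C D).det = (D * A + C).det := by
  have h : fromBlocks A (-1) C D * fromBlocks 1 0 (A - 1) 1 =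
      fromBlocks 1 (-1) (C + D * (A - 1)) D := by
    simp [fromBlocks_multiply]
  calc (fromBlocks A (-1) C D).det
      = (fromBlocks A (-1) C D * fromBlocks 1 0 (A - 1) 1).det := by simp [det_mul]
    _ = (D * A + C).det := by
        rw [h, det_fromBlocks_one₁₁]
        congr 1
        noncomm_ring

theorem det_smul_one_sub_fromBlocks_of_row_col_sums [Field R] (A : Matrix p p R)
    (B : Matrix p q R) {r c : R} (hrow : ∀ i, ∑ j, B i j = r) (hcol : ∀ j, ∑ i, B i j = c)
    (hc : c ≠ 0) (hpq : Fintype.card p ≤ Fintype.card q) (t1 t2 t3 x : R) :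
    (x • (1 : Matrix (p ⊕ q) (p ⊕ q) R) -
        fromBlocks A B Bᵀ (t1 • 1 + t2 • of (fun _ _ => 1) + t3 • (Bᵀ * B))).det
      = (x - t1) ^ (Fintype.card q - Fintype.card p) *
        ((((x - t1) • (1 : Matrix p p R) - t3 • (B * Bᵀ) - (t2 * r / c) • of (fun _ _ => 1)) *
            (x • 1 - A)) - B * Bᵀ).det := by
  set W : Matrix p q R := (t2 / c) • of (fun _ _ => 1) + t3 • B
  have hWT : Wᵀ = (t2 / c) • of (fun _ _ => 1) + t3 • Bᵀ := by
    rw [transpose_add, transpose_smul, transpose_smul]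
    rfl
  have hWB : Wᵀ * B = t2 • of (fun _ _ => 1) + t3 • (Bᵀ * B) := by
    rw [hWT, Matrix.add_mul, smul_mul, smul_mul, of_one_mul_eq_smul_of_col_sums hcol,
      smul_smul, div_mul_cancel₀ _ hc]
  have hBW : B * Wᵀ = (t2 * r / c) • of (fun _ _ => 1) + t3 • (B * Bᵀ) := by
    rw [hWT, Matrix.mul_add, Matrix.mul_smul, Matrix.mul_smul,
      mul_of_one_eq_smul_of_row_sums hrow, smul_smul, div_mul_eq_mul_div]
  have hCD : x • (1 : Matrix (p ⊕ q) (p ⊕ q) R) -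
        fromBlocks A B Bᵀ (t1 • 1 + t2 • of (fun _ _ => 1) + t3 • (Bᵀ * B)) =
      (x - t1) • 1 - (fromBlocks (A - t1 • 1) 1 Bᵀ Wᵀ : Matrix (p ⊕ q) (p ⊕ p) R) *
        (fromBlocks 1 0 0 B : Matrix (p ⊕ p) (p ⊕ q) R) := by
    rw [fromBlocks_multiply, hWB, ← fromBlocks_one, fromBlocks_smul, fromBlocks_smul,
      sub_eq_add_neg, sub_eq_add_neg, fromBlocks_neg, fromBlocks_neg, fromBlocks_add,
      fromBlocks_add]
    congr 1 <;> simp only [Matrix.mul_one, Matrix.one_mul, Matrix.mul_zero, add_zero,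
      zero_add, smul_zero] <;> module
  have hDC : (x - t1) • 1 - (fromBlocks 1 0 0 B : Matrix (p ⊕ p) (p ⊕ q) R) *
        (fromBlocks (A - t1 • 1) 1 Bᵀ Wᵀ : Matrix (p ⊕ q) (p ⊕ p) R) =
      fromBlocks (x • 1 - A) (-1) (-(B * Bᵀ))
        ((x - t1) • (1 : Matrix p p R) - t3 • (B * Bᵀ) - (t2 * r / c) • of (fun _ _ => 1)) := by
    rw [fromBlocks_multiply, hBW, ← fromBlocks_one, fromBlocks_smul, sub_eq_add_neg,
      fromBlocks_neg, fromBlocks_add]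
    congr 1 <;> simp only [Matrix.mul_one, Matrix.one_mul, Matrix.zero_mul, add_zero,
      zero_add, smul_zero] <;> module
  rw [hCD, det_smul_one_sub_mul_comm_of_le _ _ (by simpa using hpq), hDC,
    det_fromBlocks_neg_one₁₂, ← sub_eq_add_neg, Fintype.card_sum, Fintype.card_sum,
    Nat.add_sub_add_left]

end Matrix

theorem stmt_0_general (n m : ℕ) (hnm : n ≤ m) (r : ℝ)
    (A : Matrix (Fin n) (Fin n) ℝ) (B : Matrix (Fin n) (Fin m) ℝ)
    (hrow : ∀ i : Fin n, ∑ j : Fin m, B i j = r)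
    (hcol : ∀ j : Fin m, ∑ i : Fin n, B i j = 2)
    (t1 t2 t3 : ℝ) (x : ℝ) :
    (x • (1 : Matrix (Fin n ⊕ Fin m) (Fin n ⊕ Fin m) ℝ) -
        Matrix.fromBlocks A B Bᵀ
          (t1 • (1 : Matrix (Fin m) (Fin m) ℝ) +
            t2 • Matrix.of (fun _ _ => (1 : ℝ)) + t3 • (Bᵀ * B))).det
      = (x - t1) ^ (m - n) *
        ((((x - t1) • (1 : Matrix (Fin n) (Fin n) ℝ) - t3 • (B * Bᵀ) -
              (t2 * r / 2) • Matrix.of (fun _ _ => (1 : ℝ))) *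
            (x • (1 : Matrix (Fin n) (Fin n) ℝ) - A)) - B * Bᵀ).det := by
  simpa only [Fintype.card_fin] using
    det_smul_one_sub_fromBlocks_of_row_col_sums A B hrow hcol two_ne_zero
      (by simpa only [Fintype.card_fin] using hnm) t1 t2 t3 x

/-- Row/column-sum block determinant identity. -/
theorem stmt_0 (n m : ℕ) (hn : 0 < n) (hnm : n ≤ m) (r : ℝ)
    (A : Matrix (Fin n) (Fin n) ℝ) (B : Matrix (Fin n) (Fin m) ℝ)
    (hrow : ∀ i : Fin n, ∑ j : Fin m, B i j = r)
    (hcol : ∀ j : Fin m, ∑ i : Fin n, B i j = 2)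
    (t1 t2 t3 : ℝ) (x : ℝ) :
    (x • (1 : Matrix (Fin n ⊕ Fin m) (Fin n ⊕ Fin m) ℝ) -
        Matrix.fromBlocks A B Bᵀ
          (t1 • (1 : Matrix (Fin m) (Fin m) ℝ) +
            t2 • Matrix.of (fun _ _ => (1 : ℝ)) + t3 • (Bᵀ * B))).det
      = (x - t1) ^ (m - n) *
        ((((x - t1) • (1 : Matrix (Fin n) (Fin n) ℝ) - t3 • (B * Bᵀ) -
              (t2 * r / 2) • Matrix.of (fun _ _ => (1 : ℝ))) *
            (x • (1 : Matrix (Fin n) (Fin n) ℝ) - A)) - B * Bᵀ).det :=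
  stmt_0_general n m hnm r A B hrow hcol t1 t2 t3 x
end

section
/- Let G be an r-regular graph (r ≥ 2) with n vertices and m = nr/2 edges, and let H be a regular graph on the same n vertices whose adjacency matrix commutes with that of G. Let x_1 = n^{-1/2}·𝟙, x_2, …, x_n be an orthonormal basis of ℝⁿ consisting of common eigenvectors of L(G) and L(H), with L(G)x_i = μ_i(G)x_i and L(H)x_i = μ_i(H)x_i (so μ_1(G) = μ_1(H) = 0). For real numbers t1, t2, t3, let M = [[L(H) + r·I_n, B(G)],[B(G)ᵀ, t1·I_m + t2·J_m + t3·B(G)ᵀB(G)]]. Then det(x·I_{n+m} − M) = (x − t1)^{m−n} · (x² − (r + t1 + 2r·t3 + m·t2)x + r(t1 + 2r·t3 + m·t2) − 2r) · ∏_{i=2}^{n} ( x² − (r + μ_i(H) + t1 + t3(2r − μ_i(G)))x + (r + μ_i(H))(t1 + t3(2r − μ_i(G))) − (2r − μ_i(G)) ). -/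
/-!
Conjugate by the orthogonal matrix `diag(U, I)`, where `U` has the common eigenvectors as rows.
The upper left block becomes `diag(μ_i(H) + r)` and the incidence block becomes `C = Bᵀ Uᵀ`,
whose columns are orthogonal with squared lengths `2r - μ_i(G)` because `B Bᵀ = 2r I - L(G)`.
Since `Bᵀ 𝟙 = 2 𝟙` and `x_1 = 𝟙 / √n`, also `t₂ J + t₃ BᵀB = C diag(f) Cᵀ` with `f` equal to `t₃`
except in the first coordinate. For such a block matrix one block row operation makes the lower
right block scalar, and the Schur complement is then diagonal; this gives the determinant for
`x ≠ t₁`, and continuity in `x` gives it everywhere.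
-/

open Matrix SimpleGraph

/-- The `n × m` vertex–edge incidence matrix of a graph, relative to an
enumeration `e` of its edges. -/
noncomputable def incMat {V : Type} [Fintype V] [DecidableEq V] {m : ℕ}
    (G : SimpleGraph V) [Fintype G.edgeSet] (e : Fin m ≃ G.edgeFinset) :
    Matrix V (Fin m) ℝ :=
  Matrix.of fun i j => if i ∈ (e j : Sym2 V) then (1 : ℝ) else 0

namespace Matrix

variable {K m n : Type*}

theorem smul_one_sub_fromBlocks [CommRing K] [DecidableEq m] [DecidableEq n] (x : K)
    (A : Matrix n n K) (B : Matrix n m K) (C : Matrix m n K) (D : Matrix m m K) :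
    x • 1 - fromBlocks A B C D = fromBlocks (x • 1 - A) (-B) (-C) (x • 1 - D) := by
  rw [← fromBlocks_one, fromBlocks_smul, sub_eq_add_neg, fromBlocks_neg, fromBlocks_add]
  simp [sub_eq_add_neg]

variable [Fintype m] [Fintype n] [DecidableEq m] [DecidableEq n]

theorem det_fromBlocks_diagonal_neg_of_ne_zero [Field K]
    (C : Matrix m n K) {d : n → K} (hC : Cᵀ * C = diagonal d) (δ f : n → K) {y : K}
    (hy : y ≠ 0) (hmn : Fintype.card n ≤ Fintype.card m) :
    det (fromBlocks (diagonal δ) (-Cᵀ) (-C) (y • 1 - C * diagonal f * Cᵀ)) =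
      y ^ (Fintype.card m - Fintype.card n) * ∏ i, (δ i * (y - f i * d i) - d i) := by
  -- Subtracting `C * diagonal f` times the first block row makes the lower right block scalar.
  have hrow : fromBlocks 1 0 (-(C * diagonal f)) 1 *
      fromBlocks (diagonal δ) (-Cᵀ) (-C) (y • 1 - C * diagonal f * Cᵀ) =
      fromBlocks (diagonal δ) (-Cᵀ) (-(C * diagonal (fun i => 1 + f i * δ i))) (y • 1) := by
    simp only [fromBlocks_multiply, Matrix.zero_mul, Matrix.mul_neg, Matrix.neg_mul, neg_neg,
      Matrix.mul_assoc, diagonal_mul_diagonal, ← diagonal_one, ← diagonal_add, Matrix.mul_add]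
    congr 1 <;> simp
  let _ : Invertible (y • 1 : Matrix m m K) := invertibleOfLeftInverse _ (y⁻¹ • 1) <| by
    rw [smul_mul_smul_comm, inv_mul_cancel₀ hy, Matrix.one_mul, one_smul]
  have hschur :
      diagonal δ - -Cᵀ * ⅟(y • 1 : Matrix m m K) * -(C * diagonal (fun i => 1 + f i * δ i)) =
        diagonal (fun i => δ i - y⁻¹ * (d i * (1 + f i * δ i))) := by
    change _ - _ * (y⁻¹ • 1) * _ = _
    rw [Matrix.neg_mul, Matrix.mul_neg, Matrix.neg_mul, neg_neg, Matrix.mul_smul, Matrix.mul_one,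
      Matrix.smul_mul, ← Matrix.mul_assoc, hC, diagonal_mul_diagonal, ← diagonal_smul,
      ← diagonal_sub]
    rfl
  have hpow : y ^ Fintype.card m = y ^ (Fintype.card m - Fintype.card n) * ∏ _i : n, y := by
    rw [Finset.prod_const, Finset.card_univ, ← pow_add, Nat.sub_add_cancel hmn]
  have hL : det (fromBlocks (1 : Matrix n n K) 0 (-(C * diagonal f)) 1) = 1 := by simp
  rw [← one_mul (det _), ← hL, ← det_mul, hrow, det_fromBlocks₂₂, hschur, det_smul, det_one,
    mul_one, det_diagonal, hpow, mul_assoc, ← Finset.prod_mul_distrib]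
  congr 1
  refine Finset.prod_congr rfl fun i _ => ?_
  field_simp
  ring

theorem det_fromBlocks_diagonal_neg
    (C : Matrix m n ℝ) {d : n → ℝ} (hC : Cᵀ * C = diagonal d) (δ f : n → ℝ)
    (hmn : Fintype.card n ≤ Fintype.card m) (y : ℝ) :
    det (fromBlocks (diagonal δ) (-Cᵀ) (-C) (y • 1 - C * diagonal f * Cᵀ)) =
      y ^ (Fintype.card m - Fintype.card n) * ∏ i, (δ i * (y - f i * d i) - d i) := by
  refine congrFun (Continuous.ext_on (dense_compl_singleton 0) ?_ ?_ fun y hy =>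
    det_fromBlocks_diagonal_neg_of_ne_zero C hC δ f hy hmn) y
  · fun_prop
  · fun_prop

theorem det_fromBlocks_conj_of_mul_transpose_eq_one [CommRing K] {U : Matrix n n K}
    (hU : U * Uᵀ = 1) (A : Matrix n n K) (B : Matrix n m K) (C : Matrix m n K)
    (D : Matrix m m K) :
    det (fromBlocks (U * A * Uᵀ) (U * B) (C * Uᵀ) D) = det (fromBlocks A B C D) := by
  have hconj : fromBlocks U 0 0 1 * fromBlocks A B C D * fromBlocks Uᵀ 0 0 1 =
      fromBlocks (U * A * Uᵀ) (U * B) (C * Uᵀ) D := by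
    simp [fromBlocks_multiply]
  rw [← hconj, det_mul, det_mul, mul_right_comm, ← det_mul, fromBlocks_multiply]
  simp [hU]

theorem det_smul_one_sub_fromBlocks_eq_prod {U : Matrix n n ℝ} (hU : U * Uᵀ = 1)
    {A : Matrix n n ℝ} {α : n → ℝ} (hA : U * A * Uᵀ = diagonal α) {B : Matrix n m ℝ} {d : n → ℝ}
    (hB : U * B * Bᵀ * Uᵀ = diagonal d) (hmn : Fintype.card n ≤ Fintype.card m) (t : ℝ)
    (f : n → ℝ) (x : ℝ) :
    det (x • 1 - fromBlocks A B Bᵀ (t • 1 + Bᵀ * Uᵀ * diagonal f * U * B)) =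
      (x - t) ^ (Fintype.card m - Fintype.card n) *
        ∏ i, ((x - α i) * (x - t - f i * d i) - d i) := by
  set C := Bᵀ * Uᵀ
  have hCt : Cᵀ = U * B := by simp [C]
  have hC : Cᵀ * C = diagonal d := by rw [hCt, ← hB]; simp only [C, Matrix.mul_assoc]
  have hUA : U * (x • 1 - A) * Uᵀ = diagonal (fun i => x - α i) := by
    rw [Matrix.mul_sub, Matrix.sub_mul, hA, Matrix.mul_smul, Matrix.mul_one, Matrix.smul_mul, hU,
      smul_one_eq_diagonal, diagonal_sub]
  have hD :
      x • 1 - (t • 1 + Bᵀ * Uᵀ * diagonal f * U * B) = (x - t) • 1 - C * diagonal f * Cᵀ := by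
    rw [hCt, sub_smul]; simp only [C, Matrix.mul_assoc]; abel
  rw [smul_one_sub_fromBlocks, ← det_fromBlocks_conj_of_mul_transpose_eq_one hU, hUA, hD,
    Matrix.mul_neg, ← hCt, Matrix.neg_mul,
    det_fromBlocks_diagonal_neg C hC _ f hmn]

theorem of_mul_transpose_of_orthonormal [CommSemiring K] {v : n → n → K}
    (hv : ∀ i j, v i ⬝ᵥ v j = if i = j then 1 else 0) : of v * (of v)ᵀ = 1 := by
  ext i j
  simpa [mul_apply, dotProduct, one_apply] using hv i j

theorem of_mul_mul_transpose_eq_diagonal [CommSemiring K] {v : n → n → K}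
    (hv : of v * (of v)ᵀ = 1) {L : Matrix n n K} {μ : n → K} (hL : ∀ i, L *ᵥ v i = μ i • v i) :
    of v * L * (of v)ᵀ = diagonal μ := by
  have hcols : L * (of v)ᵀ = (of v)ᵀ * diagonal μ := by
    ext a j
    simpa [mul_apply, mulVec, dotProduct, mul_comm, diagonal_apply] using congrFun (hL j) a
  rw [Matrix.mul_assoc, hcols, ← Matrix.mul_assoc, hv, Matrix.one_mul]

theorem transpose_mul_diagonal_single_mul [CommSemiring K] (U : Matrix n n K) (z : n) (c : K) :
    Uᵀ * diagonal (Pi.single z c) * U = c • vecMulVec (U z) (U z) := by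
  ext a b
  simp [mul_apply, diagonal_apply, Pi.single_apply, vecMulVec_apply]
  ring

theorem transpose_mul_diagonal_add_single_mul {k : Type*} [Fintype k] [CommRing K]
    {U : Matrix n n K} (hU : Uᵀ * U = 1) (B : Matrix n k K) (t c : K) (z : n) :
    Bᵀ * Uᵀ * diagonal (Function.const n t + Pi.single z c) * U * B =
      t • (Bᵀ * B) + c • (Bᵀ * vecMulVec (U z) (U z) * B) := by
  have hdiag :
      diagonal (Function.const n t + Pi.single z c) = t • 1 + diagonal (Pi.single z c) := by
    rw [smul_one_eq_diagonal, diagonal_add]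
    rfl
  have hmid : Uᵀ * diagonal (Function.const n t + Pi.single z c) * U =
      t • 1 + c • vecMulVec (U z) (U z) := by
    rw [hdiag, Matrix.mul_add, Matrix.add_mul, transpose_mul_diagonal_single_mul, Matrix.mul_smul,
      Matrix.smul_mul, Matrix.mul_one, hU]
  calc Bᵀ * Uᵀ * diagonal (Function.const n t + Pi.single z c) * U * B
      = Bᵀ * (Uᵀ * diagonal (Function.const n t + Pi.single z c) * U) * B := by
        simp only [Matrix.mul_assoc]
    _ = _ := by
      rw [hmid, Matrix.mul_add, Matrix.add_mul, Matrix.mul_smul, Matrix.smul_mul, Matrix.mul_one,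
        Matrix.mul_smul, Matrix.smul_mul]

end Matrix

section Incidence

variable {V : Type} [Fintype V] [DecidableEq V] {m : ℕ} (G : SimpleGraph V) [Fintype G.edgeSet]
  (e : Fin m ≃ G.edgeFinset)

theorem incMat_apply [DecidableRel G.Adj] (i : V) (j : Fin m) :
    incMat G e i j = G.incMatrix ℝ i (e j) := by
  have he : (e j : Sym2 V) ∈ G.edgeSet := mem_edgeFinset.mp (e j).2
  simp [incMat, incMatrix_apply', incidenceSet, he]

theorem sum_incMat_apply (j : Fin m) : ∑ i, incMat G e i j = 2 := by
  classical
  simp only [incMat_apply]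
  exact sum_incMatrix_apply_of_mem_edgeSet G (mem_edgeFinset.mp (e j).2)

theorem const_vecMul_incMat (c : ℝ) : (fun _ => c) ᵥ* incMat G e = fun _ => 2 * c := by
  ext j
  simp [vecMul, dotProduct, ← Finset.mul_sum, sum_incMat_apply, mul_comm]

theorem incMat_mul_transpose [DecidableRel G.Adj] :
    incMat G e * (incMat G e)ᵀ = G.degMatrix ℝ + G.adjMatrix ℝ := by
  have hsum (F : Sym2 V → ℝ) (hF : ∀ s ∉ G.edgeFinset, F s = 0) : ∑ j, F (e j) = ∑ s, F s := by
    rw [Fintype.sum_equiv e _ (fun s : G.edgeFinset => F s) fun _ => rfl,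
      Finset.sum_coe_sort G.edgeFinset F]
    exact Finset.sum_subset (Finset.subset_univ _) fun s _ hs => hF s hs
  ext a b
  have hincMatrix := congrFun₂ (G.incMatrix_mul_transpose (R := ℝ)) a b
  simp only [mul_apply, transpose_apply, of_apply] at hincMatrix
  simp only [mul_apply, transpose_apply, incMat_apply]
  rw [hsum (fun s => G.incMatrix ℝ a s * G.incMatrix ℝ b s) fun s hs => by
    simp [incMatrix_of_notMem_incidenceSet G fun h => hs (mem_edgeFinset.mpr h.1)], hincMatrix]
  by_cases hab : a = b
  · subst hab; simp [degMatrix]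
  · simp [hab, degMatrix]

theorem incMat_mul_transpose_of_isRegularOfDegree [DecidableRel G.Adj] {r : ℕ}
    (hG : G.IsRegularOfDegree r) :
    incMat G e * (incMat G e)ᵀ = (2 * r : ℝ) • 1 - G.lapMatrix ℝ := by
  have hdeg : G.degMatrix ℝ = (r : ℝ) • 1 := by
    rw [degMatrix, smul_one_eq_diagonal]
    simp [hG _]
  rw [incMat_mul_transpose, lapMatrix, hdeg, mul_smul]
  module

theorem transpose_incMat_mul_vecMulVec_const_mul (c : ℝ) :
    (incMat G e)ᵀ * vecMulVec (fun _ : V => c) (fun _ : V => c) * incMat G e =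
      (4 * c ^ 2) • of fun _ _ => (1 : ℝ) := by
  rw [mul_vecMulVec, vecMulVec_mul, mulVec_transpose, const_vecMul_incMat]
  ext
  simp [vecMulVec_apply]
  ring

-- `Bᵀ 𝟙 = 2 𝟙` and `U z = 𝟙 / √|V|`, so `J = (|V| / 4) Bᵀ (U z) (U z)ᵀ B`.
theorem smul_ones_add_smul_transpose_mul_incMat_eq_conj {U : Matrix V V ℝ} (hU : Uᵀ * U = 1)
    (z : V) (hz : U z = fun _ => 1 / √(Fintype.card V)) (t₂ t₃ : ℝ) :
    t₂ • of (fun _ _ => (1 : ℝ)) + t₃ • ((incMat G e)ᵀ * incMat G e) =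
      (incMat G e)ᵀ * Uᵀ * diagonal (Function.const V t₃ + Pi.single z (Fintype.card V * t₂ / 4)) *
        U * incMat G e := by
  rw [transpose_mul_diagonal_add_single_mul hU, hz, transpose_incMat_mul_vecMulVec_const_mul,
    smul_smul, add_comm]
  have hV : (Fintype.card V : ℝ) ≠ 0 := by
    have : Nonempty V := ⟨z⟩
    positivity
  rw [div_pow, Real.sq_sqrt (Nat.cast_nonneg _)]
  field_simp

end Incidence

theorem stmt_1_general (n m r : ℕ) (hr : 2 ≤ r) (hn : 0 < n) (hm : n * r = 2 * m)
    (G H : SimpleGraph (Fin n)) [DecidableRel G.Adj] [DecidableRel H.Adj]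
    [Fintype G.edgeSet]
    (hG : G.IsRegularOfDegree r)
    (e : Fin m ≃ G.edgeFinset)
    (v : Fin n → (Fin n → ℝ)) (μG μH : Fin n → ℝ)
    (hortho : ∀ i j, v i ⬝ᵥ v j = if i = j then 1 else 0)
    (hv0 : ∀ k, v ⟨0, hn⟩ k = 1 / Real.sqrt n)
    (heigG : ∀ i, (G.lapMatrix ℝ).mulVec (v i) = μG i • v i)
    (heigH : ∀ i, (H.lapMatrix ℝ).mulVec (v i) = μH i • v i)
    (hμG0 : μG ⟨0, hn⟩ = 0) (hμH0 : μH ⟨0, hn⟩ = 0)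
    (t1 t2 t3 : ℝ) (x : ℝ) :
    (x • (1 : Matrix (Fin n ⊕ Fin m) (Fin n ⊕ Fin m) ℝ) -
        Matrix.fromBlocks (H.lapMatrix ℝ + (r : ℝ) • 1) (incMat G e) (incMat G e)ᵀ
          (t1 • (1 : Matrix (Fin m) (Fin m) ℝ) +
            t2 • Matrix.of (fun _ _ => (1 : ℝ)) +
            t3 • ((incMat G e)ᵀ * incMat G e))).det
      = (x - t1) ^ (m - n) *
          (x ^ 2 - ((r : ℝ) + t1 + 2 * (r : ℝ) * t3 + (m : ℝ) * t2) * x +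
            (r : ℝ) * (t1 + 2 * (r : ℝ) * t3 + (m : ℝ) * t2) - 2 * (r : ℝ)) *
          ∏ i ∈ Finset.univ.erase (⟨0, hn⟩ : Fin n),
            (x ^ 2 - ((r : ℝ) + μH i + t1 + t3 * (2 * (r : ℝ) - μG i)) * x +
              ((r : ℝ) + μH i) * (t1 + t3 * (2 * (r : ℝ) - μG i)) -
              (2 * (r : ℝ) - μG i)) := by
  set z : Fin n := ⟨0, hn⟩
  have hU : of v * (of v)ᵀ = 1 := of_mul_transpose_of_orthonormal hortho
  have hA : of v * (H.lapMatrix ℝ + (r : ℝ) • 1) * (of v)ᵀ = diagonal fun i => μH i + r :=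
    of_mul_mul_transpose_eq_diagonal hU fun i => by
      rw [add_mulVec, heigH, smul_mulVec, one_mulVec, add_smul]
  have hB : of v * incMat G e * (incMat G e)ᵀ * (of v)ᵀ = diagonal fun i => 2 * r - μG i := by
    rw [Matrix.mul_assoc (of v), incMat_mul_transpose_of_isRegularOfDegree G e hG]
    exact of_mul_mul_transpose_eq_diagonal hU fun i => by
      rw [sub_mulVec, heigG, smul_mulVec, one_mulVec, sub_smul]
  have hmn : n ≤ m := by nlinarith
  have hz : of v z = fun _ => 1 / √(Fintype.card (Fin n)) := by
    rw [Fintype.card_fin]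
    exact funext hv0
  rw [add_assoc, smul_ones_add_smul_transpose_mul_incMat_eq_conj G e (mul_eq_one_comm.mp hU) z hz,
    det_smul_one_sub_fromBlocks_eq_prod hU hA hB (by simpa using hmn), Fintype.card_fin,
    Fintype.card_fin, ← Finset.mul_prod_erase _ _ (Finset.mem_univ z), ← mul_assoc]
  congr 1
  · have hnr : (n * r : ℝ) = 2 * m := by exact_mod_cast hm
    simp only [Pi.add_apply, Function.const_apply, Pi.single_eq_same, hμG0, hμH0]
    linear_combination (-(x - t1) ^ (m - n) * (x - r) * t2 / 2) * hnr
  · refine Finset.prod_congr rfl fun i hi => ?_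
    simp only [Pi.add_apply, Function.const_apply, Pi.single_eq_of_ne (Finset.ne_of_mem_erase hi)]
    ring

theorem stmt_1 (n m r : ℕ) (hr : 2 ≤ r) (hn : 0 < n) (hm : n * r = 2 * m)
    (G H : SimpleGraph (Fin n)) [DecidableRel G.Adj] [DecidableRel H.Adj]
    [Fintype G.edgeSet]
    (hG : G.IsRegularOfDegree r) (rH : ℕ) (hH : H.IsRegularOfDegree rH)
    (hcomm : G.adjMatrix ℝ * H.adjMatrix ℝ = H.adjMatrix ℝ * G.adjMatrix ℝ)
    (e : Fin m ≃ G.edgeFinset)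
    (v : Fin n → (Fin n → ℝ)) (μG μH : Fin n → ℝ)
    (hortho : ∀ i j, v i ⬝ᵥ v j = if i = j then 1 else 0)
    (hv0 : ∀ k, v ⟨0, hn⟩ k = 1 / Real.sqrt n)
    (heigG : ∀ i, (G.lapMatrix ℝ).mulVec (v i) = μG i • v i)
    (heigH : ∀ i, (H.lapMatrix ℝ).mulVec (v i) = μH i • v i)
    (hμG0 : μG ⟨0, hn⟩ = 0) (hμH0 : μH ⟨0, hn⟩ = 0)
    (t1 t2 t3 : ℝ) (x : ℝ) :
    (x • (1 : Matrix (Fin n ⊕ Fin m) (Fin n ⊕ Fin m) ℝ) -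
        Matrix.fromBlocks (H.lapMatrix ℝ + (r : ℝ) • 1) (incMat G e) (incMat G e)ᵀ
          (t1 • (1 : Matrix (Fin m) (Fin m) ℝ) +
            t2 • Matrix.of (fun _ _ => (1 : ℝ)) +
            t3 • ((incMat G e)ᵀ * incMat G e))).det
      = (x - t1) ^ (m - n) *
          (x ^ 2 - ((r : ℝ) + t1 + 2 * (r : ℝ) * t3 + (m : ℝ) * t2) * x +
            (r : ℝ) * (t1 + 2 * (r : ℝ) * t3 + (m : ℝ) * t2) - 2 * (r : ℝ)) *
          ∏ i ∈ Finset.univ.erase (⟨0, hn⟩ : Fin n),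
            (x ^ 2 - ((r : ℝ) + μH i + t1 + t3 * (2 * (r : ℝ) - μG i)) * x +
              ((r : ℝ) + μH i) * (t1 + t3 * (2 * (r : ℝ) - μG i)) -
              (2 * (r : ℝ) - μG i)) :=
  stmt_1_general n m r hr hn hm G H hG e v μG μH hortho hv0 heigG heigH hμG0 hμH0 t1 t2 t3 x
end

section
/- Let G be an r-regular graph (r ≥ 2) with n vertices and m = nr/2 edges, and let H be a regular graph on the same n vertices whose adjacency matrix commutes with that of G. Let x_1 = n^{-1/2}·𝟙, x_2, …, x_n be an orthonormal basis of ℝⁿ of common eigenvectors of L(G) and L(H), with eigenvalues μ_i(G) and μ_i(H) respectively (μ_1(G) = μ_1(H) = 0). Then the characteristic polynomial of the Laplacian of [S(G)]^{H}, namely of the block matrix [[L(H) + r·I_n, −B(G)],[−B(G)ᵀ, 2·I_m]], equals x·(x − (r+2))·(x − 2)^{m−n} · ∏_{i=2}^{n} ( x² − (r + μ_i(H) + 2)x + 2μ_i(H) + μ_i(G) ). -/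
open Matrix SimpleGraph

lemma incMat_mul_transpose_s2 {n m : ℕ} (G : SimpleGraph (Fin n)) [DecidableRel G.Adj]
    [Fintype G.edgeSet] (e : Fin m ≃ G.edgeFinset) :
    incMat G e * (incMat G e)ᵀ
      = G.adjMatrix ℝ + Matrix.diagonal (fun i => (G.degree i : ℝ)) := by
  ext i k
  have h1 : (incMat G e * (incMat G e)ᵀ) i k
      = ∑ s ∈ G.edgeFinset, (if i ∈ s ∧ k ∈ s then (1:ℝ) else 0) := by
    rw [Matrix.mul_apply, ← Finset.sum_coe_sort G.edgeFinset]
    rw [Fintype.sum_equiv e _ (fun s : G.edgeFinset =>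
      if i ∈ (s:Sym2 (Fin n)) ∧ k ∈ (s:Sym2 (Fin n)) then (1:ℝ) else 0)]
    intro j
    simp only [incMat, Matrix.of_apply, Matrix.transpose_apply, ite_and]
    split_ifs <;> norm_num
  rw [h1]
  by_cases hik : i = k
  · subst hik
    have : ∑ s ∈ G.edgeFinset, (if i ∈ s ∧ i ∈ s then (1:ℝ) else 0)
        = (G.incidenceFinset i).card := by
      rw [incidenceFinset_eq_filter, Finset.card_filter]
      simp [and_self]
    rw [this, card_incidenceFinset_eq_degree]
    simp [Matrix.diagonal]
  · have hsum : ∑ s ∈ G.edgeFinset, (if i ∈ s ∧ k ∈ s then (1:ℝ) else 0)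
        = ∑ s ∈ G.edgeFinset, (if s = s(i,k) then (1:ℝ) else 0) := by
      refine Finset.sum_congr rfl fun s _ => ?_
      simp only [Sym2.mem_and_mem_iff hik]
    rw [hsum, Finset.sum_ite_eq' G.edgeFinset (s(i,k)) (fun _ => (1:ℝ))]
    simp [Matrix.diagonal, hik, SimpleGraph.mem_edgeFinset]

lemma det_of_eigenbasis {n : ℕ} (S : Matrix (Fin n) (Fin n) ℝ)
    (v : Fin n → Fin n → ℝ) (d : Fin n → ℝ)
    (hortho : ∀ i j, v i ⬝ᵥ v j = if i = j then 1 else 0)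
    (heig : ∀ i, S.mulVec (v i) = d i • v i) :
    S.det = ∏ i, d i := by
  set P : Matrix (Fin n) (Fin n) ℝ := Matrix.of v with hP
  have hPP : P * Pᵀ = 1 := by
    ext i j
    simpa [Matrix.mul_apply, Matrix.one_apply, dotProduct, hP] using hortho i j
  have hSP : S * Pᵀ = Pᵀ * Matrix.diagonal d := by
    ext i j
    have h := congrFun (heig j) i
    simp only [Matrix.mulVec, dotProduct, Pi.smul_apply, smul_eq_mul] at h
    simp [Matrix.mul_apply, Matrix.diagonal, hP, h, mul_comm]
  have hdet : P.det * Pᵀ.det = 1 := by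
    rw [← Matrix.det_mul, hPP, Matrix.det_one]
  calc S.det = (P.det * Pᵀ.det) * S.det := by rw [hdet, one_mul]
    _ = P.det * (S * Pᵀ).det := by rw [Matrix.det_mul]; ring
    _ = P.det * (Pᵀ.det * (Matrix.diagonal d).det) := by rw [hSP, Matrix.det_mul]
    _ = (Matrix.diagonal d).det := by rw [← mul_assoc, hdet, one_mul]
    _ = ∏ i, d i := Matrix.det_diagonal

lemma stmt2_key (n m r : ℕ) (hr : 2 ≤ r) (hn : 0 < n) (hm : n * r = 2 * m)
    (G H : SimpleGraph (Fin n)) [DecidableRel G.Adj] [DecidableRel H.Adj]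
    [Fintype G.edgeSet]
    (hG : G.IsRegularOfDegree r)
    (e : Fin m ≃ G.edgeFinset)
    (v : Fin n → (Fin n → ℝ)) (μG μH : Fin n → ℝ)
    (hortho : ∀ i j, v i ⬝ᵥ v j = if i = j then 1 else 0)
    (heigG : ∀ i, (G.lapMatrix ℝ).mulVec (v i) = μG i • v i)
    (heigH : ∀ i, (H.lapMatrix ℝ).mulVec (v i) = μH i • v i)
    (hμG0 : μG ⟨0, hn⟩ = 0) (hμH0 : μH ⟨0, hn⟩ = 0)
    (x : ℝ) (hx : x ≠ 2) :
    (x • (1 : Matrix (Fin n ⊕ Fin m) (Fin n ⊕ Fin m) ℝ) -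
        Matrix.fromBlocks (H.lapMatrix ℝ + (r : ℝ) • 1)
          (-(incMat G e)) (-(incMat G e)ᵀ)
          ((2 : ℝ) • (1 : Matrix (Fin m) (Fin m) ℝ))).det
      = x * (x - ((r : ℝ) + 2)) * (x - 2) ^ (m - n) *
          ∏ i ∈ Finset.univ.erase (⟨0, hn⟩ : Fin n),
            (x ^ 2 - ((r : ℝ) + μH i + 2) * x + 2 * μH i + μG i) := by
  have hx2 : x - 2 ≠ 0 := sub_ne_zero.mpr hx
  set B := incMat G e with hB
  set LH := H.lapMatrix ℝ with hLH
  set LG := G.lapMatrix ℝ with hLG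
  -- rewrite as fromBlocks
  have hmat : x • (1 : Matrix (Fin n ⊕ Fin m) (Fin n ⊕ Fin m) ℝ) -
        Matrix.fromBlocks (LH + (r : ℝ) • 1) (-B) (-Bᵀ)
          ((2 : ℝ) • (1 : Matrix (Fin m) (Fin m) ℝ))
      = Matrix.fromBlocks (x • 1 - (LH + (r : ℝ) • 1)) B Bᵀ
          ((x - 2) • (1 : Matrix (Fin m) (Fin m) ℝ)) := by
    ext i j
    cases i <;> cases j <;>
      simp [Matrix.one_apply, sub_smul, Matrix.sub_apply, Matrix.smul_apply]
  rw [hmat]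
  haveI : Invertible ((x - 2) • (1 : Matrix (Fin m) (Fin m) ℝ)) :=
    ⟨(x - 2)⁻¹ • 1, by
      rw [Matrix.smul_mul, Matrix.mul_smul, Matrix.one_mul, smul_smul,
        inv_mul_cancel₀ hx2, one_smul], by
      rw [Matrix.smul_mul, Matrix.mul_smul, Matrix.one_mul, smul_smul,
        mul_inv_cancel₀ hx2, one_smul]⟩
  rw [Matrix.det_fromBlocks₂₂]
  have hinv : ⅟((x - 2) • (1 : Matrix (Fin m) (Fin m) ℝ)) = (x - 2)⁻¹ • 1 :=
    invOf_eq_right_inv (by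
      rw [Matrix.smul_mul, Matrix.mul_smul, Matrix.one_mul, smul_smul,
        mul_inv_cancel₀ hx2, one_smul])
  rw [hinv]
  have hdetD : ((x - 2) • (1 : Matrix (Fin m) (Fin m) ℝ)).det = (x - 2) ^ m := by
    rw [Matrix.det_smul, Matrix.det_one, Fintype.card_fin, mul_one]
  rw [hdetD]
  -- the Schur complement
  have hBB : B * Bᵀ = ((2 : ℝ) * r) • 1 - LG := by
    rw [hB, incMat_mul_transpose_s2]
    have hdeg : Matrix.diagonal (fun i => (G.degree i : ℝ))
        = (r : ℝ) • (1 : Matrix (Fin n) (Fin n) ℝ) := by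
      ext i j
      by_cases h : i = j <;> simp [Matrix.diagonal, Matrix.one_apply, h, hG i, hG j]
    have hadj : G.adjMatrix ℝ = (r : ℝ) • 1 - LG := by
      rw [hLG, SimpleGraph.lapMatrix, ← hdeg]
      have : G.degMatrix ℝ = Matrix.diagonal (fun i => (G.degree i : ℝ)) := rfl
      rw [this]
      exact (sub_sub_cancel _ _).symm
    rw [hadj, hdeg]
    have h2 : ((2 : ℝ) * r) • (1 : Matrix (Fin n) (Fin n) ℝ)
        = (r : ℝ) • 1 + (r : ℝ) • 1 := by rw [two_mul, add_smul]
    rw [h2]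
    abel
  have hSchur : x • 1 - (LH + (r : ℝ) • 1) - B * ((x - 2)⁻¹ • (1 : Matrix (Fin m) (Fin m) ℝ)) * Bᵀ
      = x • 1 - LH - (r : ℝ) • 1 - (x - 2)⁻¹ • (((2 : ℝ) * r) • 1 - LG) := by
    rw [Matrix.mul_smul, Matrix.mul_one, Matrix.smul_mul, hBB]
    abel
  rw [hSchur]
  -- eigenvalues of the Schur complement
  set d : Fin n → ℝ := fun i => (x - μH i - r) - (x - 2)⁻¹ * (2 * r - μG i) with hd
  have heigS : ∀ i, (x • 1 - LH - (r : ℝ) • 1 -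
      (x - 2)⁻¹ • (((2 : ℝ) * r) • 1 - LG)).mulVec (v i) = d i • v i := by
    intro i
    rw [Matrix.sub_mulVec, Matrix.sub_mulVec, Matrix.sub_mulVec,
      Matrix.smul_mulVec, Matrix.smul_mulVec,
      Matrix.smul_mulVec, Matrix.sub_mulVec, Matrix.smul_mulVec,
      Matrix.one_mulVec, heigH i, heigG i]
    funext k
    simp only [Pi.sub_apply, Pi.smul_apply, smul_eq_mul, hd]
    ring
  rw [det_of_eigenbasis _ v d hortho heigS]
  -- compute the product
  have hq : ∀ i, d i = (x - 2)⁻¹ *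
      (x ^ 2 - ((r : ℝ) + μH i + 2) * x + 2 * μH i + μG i) := by
    intro i
    rw [hd]
    field_simp
    ring
  have hprod : ∏ i, d i = ((x - 2)⁻¹) ^ n *
      ∏ i, (x ^ 2 - ((r : ℝ) + μH i + 2) * x + 2 * μH i + μG i) := by
    simp_rw [hq]
    rw [Finset.prod_mul_distrib, Finset.prod_const, Finset.card_univ,
      Fintype.card_fin]
  rw [hprod]
  rw [← Finset.mul_prod_erase Finset.univ _ (Finset.mem_univ (⟨0, hn⟩ : Fin n))]
  have h0 : x ^ 2 - ((r : ℝ) + μH ⟨0, hn⟩ + 2) * x + 2 * μH ⟨0, hn⟩ + μG ⟨0, hn⟩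
      = x * (x - ((r : ℝ) + 2)) := by rw [hμG0, hμH0]; ring
  rw [h0]
  have hnm : n ≤ m := by nlinarith
  have hpow : (x - 2) ^ m * ((x - 2)⁻¹) ^ n = (x - 2) ^ (m - n) := by
    have : (x - 2) ^ m = (x - 2) ^ (m - n) * (x - 2) ^ n := by
      rw [← pow_add, Nat.sub_add_cancel hnm]
    rw [this, mul_assoc, ← mul_pow, mul_inv_cancel₀ hx2, one_pow, mul_one]
  calc (x - 2) ^ m * (((x - 2)⁻¹) ^ n * (x * (x - ((r : ℝ) + 2)) *
        ∏ i ∈ Finset.univ.erase (⟨0, hn⟩ : Fin n),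
          (x ^ 2 - ((r : ℝ) + μH i + 2) * x + 2 * μH i + μG i)))
      = ((x - 2) ^ m * ((x - 2)⁻¹) ^ n) * (x * (x - ((r : ℝ) + 2)) *
        ∏ i ∈ Finset.univ.erase (⟨0, hn⟩ : Fin n),
          (x ^ 2 - ((r : ℝ) + μH i + 2) * x + 2 * μH i + μG i)) := by ring
    _ = _ := by rw [hpow]; ring

/-- `L`-characteristic polynomial of $[S(G)]^{H}$. -/
theorem stmt_2 (n m r : ℕ) (hr : 2 ≤ r) (hn : 0 < n) (hm : n * r = 2 * m)
    (G H : SimpleGraph (Fin n)) [DecidableRel G.Adj] [DecidableRel H.Adj]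
    [Fintype G.edgeSet]
    (hG : G.IsRegularOfDegree r) (rH : ℕ) (hH : H.IsRegularOfDegree rH)
    (hcomm : G.adjMatrix ℝ * H.adjMatrix ℝ = H.adjMatrix ℝ * G.adjMatrix ℝ)
    (e : Fin m ≃ G.edgeFinset)
    (v : Fin n → (Fin n → ℝ)) (μG μH : Fin n → ℝ)
    (hortho : ∀ i j, v i ⬝ᵥ v j = if i = j then 1 else 0)
    (hv0 : ∀ k, v ⟨0, hn⟩ k = 1 / Real.sqrt n)
    (heigG : ∀ i, (G.lapMatrix ℝ).mulVec (v i) = μG i • v i)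
    (heigH : ∀ i, (H.lapMatrix ℝ).mulVec (v i) = μH i • v i)
    (hμG0 : μG ⟨0, hn⟩ = 0) (hμH0 : μH ⟨0, hn⟩ = 0)
    (x : ℝ) :
    (x • (1 : Matrix (Fin n ⊕ Fin m) (Fin n ⊕ Fin m) ℝ) -
        Matrix.fromBlocks (H.lapMatrix ℝ + (r : ℝ) • 1)
          (-(incMat G e)) (-(incMat G e)ᵀ)
          ((2 : ℝ) • (1 : Matrix (Fin m) (Fin m) ℝ))).det
      = x * (x - ((r : ℝ) + 2)) * (x - 2) ^ (m - n) *
          ∏ i ∈ Finset.univ.erase (⟨0, hn⟩ : Fin n),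
            (x ^ 2 - ((r : ℝ) + μH i + 2) * x + 2 * μH i + μG i) := by
  have hF : Continuous (fun y : ℝ =>
      (y • (1 : Matrix (Fin n ⊕ Fin m) (Fin n ⊕ Fin m) ℝ) -
        Matrix.fromBlocks (H.lapMatrix ℝ + (r : ℝ) • 1)
          (-(incMat G e)) (-(incMat G e)ᵀ)
          ((2 : ℝ) • (1 : Matrix (Fin m) (Fin m) ℝ))).det) :=
    Continuous.matrix_det ((continuous_id.smul continuous_const).sub continuous_const)
  have hGc : Continuous (fun y : ℝ =>
      y * (y - ((r : ℝ) + 2)) * (y - 2) ^ (m - n) *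
        ∏ i ∈ Finset.univ.erase (⟨0, hn⟩ : Fin n),
          (y ^ 2 - ((r : ℝ) + μH i + 2) * y + 2 * μH i + μG i)) := by
    fun_prop
  have heq := Continuous.ext_on (dense_compl_singleton (2 : ℝ)) hF hGc
    (fun y hy => stmt2_key n m r hr hn hm G H hG e v μG μH hortho heigG heigH
      hμG0 hμH0 y hy)
  exact congrFun heq x
end

section
/- Let p ≥ 2 and let H be a spanning r-regular subgraph of the complete bipartite graph K_{p,p}. Let μ_3, …, μ_{2p} be the Laplacian eigenvalues of H remaining after removing one copy of 0 and one copy of 2r. Then the characteristic polynomial of the Laplacian of [S(K_{p,p})]_{co-𝓛(K_{p,p})}^{H}, namely of the block matrix [[L(H) + p·I_{2p}, −B(K_{p,p})],[−B(K_{p,p})ᵀ, (p²−2p+2)·I_{p²} − J_{p²} + B(K_{p,p})ᵀB(K_{p,p})]], equals x·(x − (p+2))·(x − (p+2r))·(x − (p²−2p+2))^{p²−2p+1} · ∏_{i=3}^{2p} ( x² − (p² + μ_i + 2)x + (p²−p+2)(p + μ_i) − p ). -/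
open Matrix SimpleGraph

instance (p q : ℕ) : DecidableRel (completeBipartiteGraph (Fin p) (Fin q)).Adj := by
  intro a b; unfold completeBipartiteGraph; dsimp; infer_instance

section Aux

variable {p : ℕ}

private lemma mem_edgeFinset_cbg (s : Sym2 (Fin p ⊕ Fin p)) :
    s ∈ (completeBipartiteGraph (Fin p) (Fin p)).edgeFinset ↔
      ∃ a b : Fin p, s = s(Sum.inl a, Sum.inr b) := by
  rw [mem_edgeFinset]
  induction s using Sym2.ind with
  | _ x y =>
    rw [mem_edgeSet]
    constructor
    · rintro (⟨hx, hy⟩ | ⟨hx, hy⟩)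
      · cases x with
        | inl a =>
          cases y with
          | inl b => simp at hy
          | inr b => exact ⟨a, b, rfl⟩
        | inr a => simp at hx
      · cases x with
        | inl a => simp at hx
        | inr a =>
          cases y with
          | inl b => exact ⟨b, a, Sym2.eq_swap⟩
          | inr b => simp at hy
    · rintro ⟨a, b, h⟩
      rcases Sym2.eq_iff.mp h with ⟨hx, hy⟩ | ⟨hx, hy⟩ <;> subst hx <;> subst hy
      · exact Or.inl ⟨rfl, rfl⟩
      · exact Or.inr ⟨rfl, rfl⟩

private lemma sum_edges (e : Fin (p * p) ≃ (completeBipartiteGraph (Fin p) (Fin p)).edgeFinset)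
    (F : Sym2 (Fin p ⊕ Fin p) → ℝ) :
    ∑ j : Fin (p * p), F (e j) =
      ∑ a : Fin p, ∑ b : Fin p, F s(Sum.inl a, Sum.inr b) := by
  have h1 : ∑ j : Fin (p * p), F (e j)
      = ∑ x ∈ (completeBipartiteGraph (Fin p) (Fin p)).edgeFinset, F x := by
    rw [← Finset.sum_coe_sort ((completeBipartiteGraph (Fin p) (Fin p)).edgeFinset) F]
    exact e.sum_comp (fun x => F x)
  have h2 : ∑ x ∈ (completeBipartiteGraph (Fin p) (Fin p)).edgeFinset, F x
      = ∑ ab : Fin p × Fin p, F s(Sum.inl ab.1, Sum.inr ab.2) := by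
    refine (Finset.sum_bij (fun ab _ => s(Sum.inl ab.1, Sum.inr ab.2)) ?_ ?_ ?_ ?_).symm
    · intro ab _
      exact (mem_edgeFinset_cbg _).mpr ⟨ab.1, ab.2, rfl⟩
    · intro a1 _ a2 _ h
      rcases Sym2.eq_iff.mp h with ⟨h1, h2⟩ | ⟨h1, h2⟩
      · exact Prod.ext (Sum.inl_injective h1) (Sum.inr_injective h2)
      · exact absurd h1 (by simp)
    · intro s hs
      obtain ⟨a, b, rfl⟩ := (mem_edgeFinset_cbg s).mp hs
      exact ⟨(a, b), Finset.mem_univ _, rfl⟩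
    · intros; rfl
  rw [h1, h2]
  exact Fintype.sum_prod_type _

private def esum (w : Fin p ⊕ Fin p → ℝ) (s : Sym2 (Fin p ⊕ Fin p)) : ℝ :=
  ∑ u, if u ∈ s then w u else 0

private lemma esum_pair (w : Fin p ⊕ Fin p → ℝ) (a b : Fin p) :
    esum w s(Sum.inl a, Sum.inr b) = w (Sum.inl a) + w (Sum.inr b) := by
  unfold esum
  have h : ∀ u : Fin p ⊕ Fin p,
      (if u ∈ s(Sum.inl a, Sum.inr b) then w u else 0)
        = (if u = Sum.inl a then w u else 0) + (if u = Sum.inr b then w u else 0) := by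
    intro u
    simp only [Sym2.mem_iff]
    by_cases h1 : u = Sum.inl a <;> by_cases h2 : u = Sum.inr b <;> simp [h1, h2]
  simp_rw [h, Finset.sum_add_distrib, Finset.sum_ite_eq', Finset.mem_univ, if_true]

variable (e : Fin (p * p) ≃ (completeBipartiteGraph (Fin p) (Fin p)).edgeFinset)

private lemma incMat_tv (w : Fin p ⊕ Fin p → ℝ) :
    (incMat (completeBipartiteGraph (Fin p) (Fin p)) e)ᵀ *ᵥ w
      = fun j => esum w (e j) := by
  funext j
  simp [incMat, mulVec, dotProduct, esum, ite_mul, transpose_apply]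

private lemma incMat_mv (G : Sym2 (Fin p ⊕ Fin p) → ℝ) (u : Fin p ⊕ Fin p) :
    (incMat (completeBipartiteGraph (Fin p) (Fin p)) e *ᵥ fun j => G (e j)) u
      = ∑ a : Fin p, ∑ b : Fin p,
          (if u ∈ s(Sum.inl a, Sum.inr b) then G s(Sum.inl a, Sum.inr b) else 0) := by
  have : (incMat (completeBipartiteGraph (Fin p) (Fin p)) e *ᵥ fun j => G (e j)) u
      = ∑ j : Fin (p * p), (if u ∈ (e j : Sym2 (Fin p ⊕ Fin p)) then G (e j) else 0) := by
    simp [incMat, mulVec, dotProduct, ite_mul]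
  rw [this, sum_edges e (fun s => if u ∈ s then G s else 0)]

private lemma ite_mem_pair (u : Fin p ⊕ Fin p) (a b : Fin p) (c : ℝ) :
    (if u ∈ s(Sum.inl a, Sum.inr b) then c else 0)
      = (if u = Sum.inl a then c else 0) + (if u = Sum.inr b then c else 0) := by
  simp only [Sym2.mem_iff]
  by_cases h1 : u = Sum.inl a <;> by_cases h2 : u = Sum.inr b <;> simp [h1, h2]

-- key lemma:  N (Nᵀ w) = p w + side sums
private lemma incMat_NNt (w : Fin p ⊕ Fin p → ℝ) :
    incMat (completeBipartiteGraph (Fin p) (Fin p)) e *ᵥ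
        ((incMat (completeBipartiteGraph (Fin p) (Fin p)) e)ᵀ *ᵥ w)
      = (p : ℝ) • w + Sum.elim (fun _ => ∑ b : Fin p, w (Sum.inr b))
          (fun _ => ∑ a : Fin p, w (Sum.inl a)) := by
  funext u
  rw [incMat_tv]
  rw [incMat_mv e (esum w) u]
  have hsw : ∀ a b, esum w s(Sum.inl a, Sum.inr b) = w (Sum.inl a) + w (Sum.inr b) :=
    esum_pair w
  cases u with
  | inl a0 =>
    have : ∀ a b : Fin p,
        (if (Sum.inl a0 : Fin p ⊕ Fin p) ∈ s(Sum.inl a, Sum.inr b)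
          then esum w s(Sum.inl a, Sum.inr b) else 0)
        = if a = a0 then w (Sum.inl a) + w (Sum.inr b) else 0 := by
      intro a b
      rw [hsw]
      simp only [Sym2.mem_iff]
      simp [eq_comm, Sum.inl.injEq]
    simp_rw [this]
    rw [Finset.sum_comm]
    simp_rw [Finset.sum_ite_eq' Finset.univ a0 (fun a => w (Sum.inl a) + w (Sum.inr _)),
      Finset.mem_univ, if_true]
    simp [Finset.sum_add_distrib, Finset.card_univ, mul_comm]
  | inr b0 =>
    have : ∀ a b : Fin p,
        (if (Sum.inr b0 : Fin p ⊕ Fin p) ∈ s(Sum.inl a, Sum.inr b)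
          then esum w s(Sum.inl a, Sum.inr b) else 0)
        = if b = b0 then w (Sum.inl a) + w (Sum.inr b) else 0 := by
      intro a b
      rw [hsw]
      simp only [Sym2.mem_iff]
      simp [eq_comm, Sum.inr.injEq]
    simp_rw [this]
    simp_rw [Finset.sum_ite_eq' Finset.univ b0 (fun b => w (Sum.inl _) + w (Sum.inr b)),
      Finset.mem_univ, if_true]
    simp [Finset.sum_add_distrib, Finset.card_univ, mul_comm]
    ring

private lemma incMat_tv_one :
    (incMat (completeBipartiteGraph (Fin p) (Fin p)) e)ᵀ *ᵥ (fun _ => (1 : ℝ))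
      = fun _ => (2 : ℝ) := by
  rw [incMat_tv]
  funext j
  obtain ⟨a, b, hab⟩ := (mem_edgeFinset_cbg ((e j : Sym2 (Fin p ⊕ Fin p)))).mp (e j).2
  rw [hab, esum_pair]
  norm_num

private lemma incMat_mv_one :
    incMat (completeBipartiteGraph (Fin p) (Fin p)) e *ᵥ (fun _ => (1 : ℝ))
      = fun _ => (p : ℝ) := by
  funext u
  have := incMat_mv e (fun _ => (1 : ℝ)) u
  rw [show (fun j => (fun _ => (1:ℝ)) (e j)) = (fun _ => (1:ℝ)) from rfl] at this
  rw [this]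
  simp_rw [ite_mem_pair]
  cases u with
  | inl a0 => simp [Finset.sum_add_distrib]
  | inr b0 => simp [Finset.sum_add_distrib]

private lemma incMat_sum_tv (w : Fin p ⊕ Fin p → ℝ) :
    ∑ j, ((incMat (completeBipartiteGraph (Fin p) (Fin p)) e)ᵀ *ᵥ w) j
      = (p : ℝ) * ∑ u, w u := by
  rw [incMat_tv]
  rw [sum_edges e (esum w)]
  simp_rw [esum_pair]
  rw [Fintype.sum_sum_type w]
  simp only [Finset.sum_add_distrib, Finset.sum_const, Finset.card_univ, Fintype.card_fin,
    nsmul_eq_mul]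
  rw [mul_add, Finset.mul_sum, Finset.mul_sum]


private lemma trip {n₁ n₂ α β : Type} [Fintype n₁] [Fintype n₂]
    (X : Matrix n₁ α ℝ) (A : Matrix n₁ n₂ ℝ) (Y : Matrix n₂ β ℝ) (i : α) (j : β) :
    (Xᵀ * A * Y) i j = (fun u => X u i) ⬝ᵥ (A *ᵥ fun u => Y u j) := by
  simp only [Matrix.mul_apply, Matrix.mulVec, Matrix.transpose_apply, dotProduct,
    Finset.sum_mul, Finset.mul_sum]
  rw [Finset.sum_comm]
  congr 1; funext u; congr 1; funext k; ring

end Aux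

set_option maxHeartbeats 3200000 in
/-- `L`-characteristic polynomial of
$[S(K_{p,p})]_{\overline{\mathcal L(K_{p,p})}}^{H}$. -/
theorem stmt_8 (p r : ℕ) (hp : 2 ≤ p)
    (H : SimpleGraph (Fin p ⊕ Fin p)) [DecidableRel H.Adj]
    (hH : H.IsRegularOfDegree r)
    (hsub : H ≤ completeBipartiteGraph (Fin p) (Fin p))
    (e : Fin (p * p) ≃ (completeBipartiteGraph (Fin p) (Fin p)).edgeFinset)
    (v : Fin (2 * p) → (Fin p ⊕ Fin p) → ℝ) (μ : Fin (2 * p) → ℝ)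
    (hortho : ∀ i j, v i ⬝ᵥ v j = if i = j then 1 else 0)
    (heig : ∀ i, (H.lapMatrix ℝ).mulVec (v i) = μ i • v i)
    (hv0 : ∀ u, v ⟨0, by omega⟩ u = 1 / Real.sqrt (2 * p))
    (hv1 : v ⟨1, by omega⟩ =
      Sum.elim (fun _ => 1 / Real.sqrt (2 * p)) (fun _ => -(1 / Real.sqrt (2 * p))))
    (hμ0 : μ ⟨0, by omega⟩ = 0) (hμ1 : μ ⟨1, by omega⟩ = 2 * r)
    (x : ℝ) :
    (x • (1 : Matrix ((Fin p ⊕ Fin p) ⊕ Fin (p * p)) ((Fin p ⊕ Fin p) ⊕ Fin (p * p)) ℝ) -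
        Matrix.fromBlocks (H.lapMatrix ℝ + (p : ℝ) • 1)
          (-(incMat (completeBipartiteGraph (Fin p) (Fin p)) e))
          (-(incMat (completeBipartiteGraph (Fin p) (Fin p)) e)ᵀ)
          (((p : ℝ) ^ 2 - 2 * (p : ℝ) + 2) • (1 : Matrix (Fin (p * p)) (Fin (p * p)) ℝ) -
            Matrix.of (fun _ _ => (1 : ℝ)) +
            (incMat (completeBipartiteGraph (Fin p) (Fin p)) e)ᵀ *
              incMat (completeBipartiteGraph (Fin p) (Fin p)) e)).det
      = x * (x - ((p : ℝ) + 2)) * (x - ((p : ℝ) + 2 * (r : ℝ))) *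
          (x - ((p : ℝ) ^ 2 - 2 * (p : ℝ) + 2)) ^ (p * p - 2 * p + 1) *
          ∏ i ∈ (Finset.univ.erase (⟨0, by omega⟩ : Fin (2 * p))).erase ⟨1, by omega⟩,
            (x ^ 2 - ((p : ℝ) ^ 2 + μ i + 2) * x +
              ((p : ℝ) ^ 2 - (p : ℝ) + 2) * ((p : ℝ) + μ i) - (p : ℝ)) := by
  classical
  have h2pp : 2 * p ≤ p * p := Nat.mul_le_mul_right p hp
  have hp0 : 0 < p := by omega
  have hpR : (0:ℝ) < p := by exact_mod_cast hp0
  have h2pR : (0:ℝ) < 2 * p := by linarith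
  have hs2p : (0:ℝ) < Real.sqrt (2 * p) := Real.sqrt_pos.mpr h2pR
  have hsp : (0:ℝ) < Real.sqrt p := Real.sqrt_pos.mpr hpR
  have hs2psq : Real.sqrt (2 * (p:ℝ)) * Real.sqrt (2 * p) = 2 * p :=
    Real.mul_self_sqrt (le_of_lt h2pR)
  have hspsq : Real.sqrt (p:ℝ) * Real.sqrt p = p := Real.mul_self_sqrt (le_of_lt hpR)
  set i0 : Fin (2 * p) := ⟨0, by omega⟩ with hi0
  set i1 : Fin (2 * p) := ⟨1, by omega⟩ with hi1
  have hi01 : i0 ≠ i1 := by rw [hi0, hi1]; intro h; exact absurd (congrArg Fin.val h) (by norm_num)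
  have hv0' : ∀ u, v i0 u = 1 / Real.sqrt (2 * p) := hv0
  have hv1' : v i1 = Sum.elim (fun _ => 1 / Real.sqrt (2 * (p:ℝ)))
      (fun _ => -(1 / Real.sqrt (2 * p))) := hv1
  have hμ0' : μ i0 = 0 := hμ0
  have hμ1' : μ i1 = 2 * r := hμ1
  set N := incMat (completeBipartiteGraph (Fin p) (Fin p)) e with hNdef
  have hNNt : ∀ w, N *ᵥ (Nᵀ *ᵥ w) = (p : ℝ) • w +
      Sum.elim (fun _ => ∑ b : Fin p, w (Sum.inr b)) (fun _ => ∑ a : Fin p, w (Sum.inl a)) :=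
    fun w => incMat_NNt e w
  have hNt1 : Nᵀ *ᵥ (fun _ => (1:ℝ)) = fun _ => (2:ℝ) := incMat_tv_one e
  have hN1 : N *ᵥ (fun _ => (1:ℝ)) = fun _ => (p:ℝ) := incMat_mv_one e
  have hNtsum : ∀ w, ∑ j, (Nᵀ *ᵥ w) j = (p:ℝ) * ∑ u, w u := fun w => incMat_sum_tv e w
  -- total sums of the eigenvectors
  have hvtot : ∀ i, ∑ u, v i u = Real.sqrt (2 * p) * (if i = i0 then 1 else 0) := by
    intro i
    have h := hortho i i0
    simp only [dotProduct] at h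
    simp only [hv0'] at h
    rw [← Finset.sum_mul] at h
    have hne := ne_of_gt hs2p
    rw [← h]
    field_simp
  have hside : ∀ i, i ≠ i0 → i ≠ i1 →
      (∑ a : Fin p, v i (Sum.inl a) = 0 ∧ ∑ b : Fin p, v i (Sum.inr b) = 0) := by
    intro i h0 h1
    have ht : ∑ u, v i u = 0 := by rw [hvtot i, if_neg h0, mul_zero]
    rw [Fintype.sum_sum_type] at ht
    have h := hortho i i1
    rw [if_neg h1] at h
    simp only [dotProduct] at h
    rw [Fintype.sum_sum_type] at h
    simp only [hv1', Sum.elim_inl, Sum.elim_inr] at h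
    simp only [← Finset.sum_mul] at h
    have hne := ne_of_gt hs2p
    have hd : (∑ a : Fin p, v i (Sum.inl a)) - (∑ b : Fin p, v i (Sum.inr b)) = 0 := by
      have h' : ((∑ a : Fin p, v i (Sum.inl a)) - (∑ b : Fin p, v i (Sum.inr b)))
          * (1 / Real.sqrt (2 * p)) = 0 := by rw [sub_mul]; linarith [h]
      rcases mul_eq_zero.mp h' with h'' | h''
      · exact h''
      · exact absurd h'' (by positivity)
    constructor <;> linarith
  -- N-transpose applied to special eigenvectors
  have hNtv1 : Nᵀ *ᵥ v i1 = 0 := by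
    rw [hNdef, incMat_tv]
    funext j
    obtain ⟨a, b, hab⟩ := (mem_edgeFinset_cbg (p := p) (e j)).mp (e j).2
    rw [hab, esum_pair, hv1']
    simp
  have hNtv0 : Nᵀ *ᵥ v i0 = fun _ => 2 / Real.sqrt (2 * p) := by
    have hv : v i0 = (1 / Real.sqrt (2 * (p:ℝ))) • (fun _ => (1:ℝ)) := by
      funext u; rw [hv0' u]; simp
    rw [hv, Matrix.mulVec_smul, hNt1]
    funext j
    simp only [Pi.smul_apply, smul_eq_mul]
    ring
  set lam : Fin (2 * p) → ℝ := fun i => if i = i0 then (2 * (p:ℝ)) else if i = i1 then 0 else p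
    with hlam
  have hFlam : ∀ i, N *ᵥ (Nᵀ *ᵥ v i) = lam i • v i := by
    intro i
    by_cases h1 : i = i1
    · subst h1
      rw [hNtv1, Matrix.mulVec_zero, hlam]
      simp [hi01.symm]
    by_cases h0 : i = i0
    · subst h0
      rw [hNtv0]
      have hc : (fun _ : Fin (p * p) => 2 / Real.sqrt (2 * (p:ℝ)))
          = (2 / Real.sqrt (2 * (p:ℝ))) • (fun _ : Fin (p * p) => (1:ℝ)) := by
        funext u; simp
      rw [hc, Matrix.mulVec_smul, hN1, hlam]
      funext u
      simp only [Pi.smul_apply, smul_eq_mul, if_pos rfl, hv0' u]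
      rw [div_mul_eq_mul_div, mul_one_div]
      simp
    · rw [hNNt (v i)]
      have hz : Sum.elim (fun _ => ∑ b : Fin p, v i (Sum.inr b))
          (fun _ => ∑ a : Fin p, v i (Sum.inl a)) = (0 : (Fin p ⊕ Fin p) → ℝ) := by
        funext u
        cases u <;> simp [(hside i h0 h1).1, (hside i h0 h1).2]
      rw [hz, add_zero, hlam]
      simp [h0, h1]
  have hdotmv : ∀ (ii : Fin (2 * p)) (y : Fin (p * p) → ℝ),
      (Nᵀ *ᵥ v ii) ⬝ᵥ y = v ii ⬝ᵥ (N *ᵥ y) := by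
    intro ii y
    rw [Matrix.mulVec_transpose, ← Matrix.dotProduct_mulVec]
  have hFdot : ∀ i j, (Nᵀ *ᵥ v i) ⬝ᵥ (Nᵀ *ᵥ v j) = lam j * (if i = j then 1 else 0) := by
    intro i j
    rw [hdotmv, hFlam j, dotProduct_smul, hortho i j, smul_eq_mul]
  set sl : Fin (2 * p) → ℝ := fun i => if i = i0 then Real.sqrt (2 * p) else Real.sqrt p
    with hsl
  have hslpos : ∀ i, 0 < sl i := by
    intro i; rw [hsl]; dsimp only; split_ifs; exacts [hs2p, hsp]
  have hslne : ∀ i, sl i ≠ 0 := fun i => ne_of_gt (hslpos i)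
  have hslsq : ∀ i, i ≠ i1 → sl i * sl i = lam i := by
    intro i h1
    rw [hsl, hlam]; dsimp only
    split_ifs with h0
    · exact hs2psq
    · exact hspsq
  set sB : Fin (2 * p) → ℝ := fun i => if i = i1 then 0 else sl i with hsB
  set U : Fin (2 * p) → (Fin (p * p) → ℝ) := fun i => (sl i)⁻¹ • (Nᵀ *ᵥ v i) with hU
  have hNU : ∀ i, Nᵀ *ᵥ v i = sl i • U i := by
    intro i; rw [hU]; dsimp only; rw [smul_inv_smul₀ (hslne i)]
  have hU1 : U i1 = 0 := by rw [hU]; dsimp only; rw [hNtv1, smul_zero]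
  have hU0 : U i0 = fun _ => (p:ℝ)⁻¹ := by
    rw [hU]; dsimp only
    rw [hNtv0, hsl]; dsimp only; rw [if_pos rfl]
    funext j
    simp only [Pi.smul_apply, smul_eq_mul]
    calc (Real.sqrt (2 * (p:ℝ)))⁻¹ * (2 / Real.sqrt (2 * (p:ℝ)))
        = 2 * (Real.sqrt (2 * (p:ℝ)) * Real.sqrt (2 * (p:ℝ)))⁻¹ := by
          rw [div_eq_mul_inv, mul_inv]; ring
      _ = 2 * (2 * (p:ℝ))⁻¹ := by rw [hs2psq]
      _ = (p:ℝ)⁻¹ := by rw [mul_inv, ← mul_assoc]; norm_num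
  have hUdotU : ∀ i j, i ≠ i1 → j ≠ i1 → U i ⬝ᵥ U j = if i = j then 1 else 0 := by
    intro i j hi hj
    rw [hU]; dsimp only
    rw [smul_dotProduct, dotProduct_smul, hFdot i j]
    by_cases h : i = j
    · subst h
      simp only [if_pos rfl, mul_one, smul_eq_mul]
      rw [← hslsq i hi]
      field_simp
      exact div_self (hslne i)
    · simp only [if_neg h, mul_zero, smul_zero]
  -- inner product on EuclideanSpace is dotProduct
  have hinner : ∀ x y : EuclideanSpace ℝ (Fin (p * p)),
      (inner ℝ x y : ℝ) = x ⬝ᵥ y := by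
    intro x y
    simp [PiLp.inner_apply, RCLike.inner_apply, dotProduct, starRingEnd_apply, mul_comm]
  set sSet : Set (Fin (p * p)) := {k | k.1 < 2 * p ∧ k.1 ≠ 1} with hsSet
  set uu : Fin (p * p) → EuclideanSpace ℝ (Fin (p * p)) :=
    fun k => if h : k.1 < 2 * p then WithLp.toLp 2 (U ⟨k.1, h⟩) else 0 with huu
  have hfin : Module.finrank ℝ (EuclideanSpace ℝ (Fin (p * p))) = Fintype.card (Fin (p * p)) :=
    finrank_euclideanSpace
  have horth : Orthonormal ℝ (sSet.restrict uu) := by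
    rw [orthonormal_iff_ite]
    rintro ⟨k, hk1, hk2⟩ ⟨l, hl1, hl2⟩
    rw [hinner, huu]
    dsimp only [Set.restrict, Set.domRestrict]
    rw [dif_pos hk1, dif_pos hl1]
    rw [WithLp.ofLp_toLp, WithLp.ofLp_toLp]
    rw [hUdotU ⟨k.1, hk1⟩ ⟨l.1, hl1⟩ (Fin.ne_of_val_ne hk2) (Fin.ne_of_val_ne hl2)]
    have hiff : ((⟨k.1, hk1⟩ : Fin (2 * p)) = ⟨l.1, hl1⟩) ↔
        ((⟨k, ⟨hk1, hk2⟩⟩ : sSet) = ⟨l, ⟨hl1, hl2⟩⟩) := by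
      rw [Fin.mk.injEq, Subtype.mk.injEq, Fin.val_inj]
    by_cases h : ((⟨k.1, hk1⟩ : Fin (2 * p)) = ⟨l.1, hl1⟩)
    · rw [if_pos h, if_pos (hiff.mp h)]
    · rw [if_neg h, if_neg (fun hh => h (hiff.mpr hh))]
  obtain ⟨bON, hbON⟩ := horth.exists_orthonormalBasis_extension_of_card_eq hfin
  set bb : Fin (p * p) → Fin (p * p) → ℝ := fun k => (bON k : EuclideanSpace ℝ (Fin (p * p)))
    with hbb
  have hbd : ∀ k l, bb k ⬝ᵥ bb l = if k = l then 1 else 0 := by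
    intro k l
    have h := (orthonormal_iff_ite (𝕜 := ℝ)).mp bON.orthonormal k l
    rw [hinner] at h
    exact h
  set nu : Fin (2 * p) → Fin (p * p) := fun i => ⟨i.1, lt_of_lt_of_le i.2 h2pp⟩ with hnu
  have hnumem : ∀ i, i ≠ i1 → nu i ∈ sSet := by
    intro i hi
    refine ⟨i.2, fun hval => hi (Fin.ext hval)⟩
  have hbU : ∀ i, i ≠ i1 → bb (nu i) = U i := by
    intro i hi
    have h := hbON (nu i) (hnumem i hi)
    rw [huu] at h
    have h2 : bb (nu i) = if h : (nu i).1 < 2 * p then U ⟨(nu i).1, h⟩ else 0 := by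
      rw [hbb]; dsimp only; rw [h]
      dsimp only
      split_ifs <;> rfl
    rw [h2, dif_pos (show (nu i).1 < 2 * p from i.2)]
  have hNb : ∀ i k, (Nᵀ *ᵥ v i) ⬝ᵥ bb k = if k = nu i then sB i else 0 := by
    intro i k
    by_cases hi : i = i1
    · subst hi
      rw [hNtv1, zero_dotProduct, hsB]
      simp
    · rw [hNU i, smul_dotProduct, ← hbU i hi, hbd (nu i) k, hsB]
      dsimp only
      rw [if_neg hi]
      by_cases h : k = nu i
      · rw [if_pos h, if_pos h.symm, smul_eq_mul, mul_one]
      · rw [if_neg h, if_neg (fun hh => h hh.symm), smul_eq_mul, mul_zero]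
  have h1b : ∀ k, (fun _ => (1:ℝ)) ⬝ᵥ bb k = if k = nu i0 then (p:ℝ) else 0 := by
    intro k
    have h1U : (fun _ : Fin (p * p) => (1:ℝ)) = (p:ℝ) • U i0 := by
      rw [hU0]; funext j
      simp only [Pi.smul_apply, smul_eq_mul]
      rw [mul_inv_cancel₀ (ne_of_gt hpR)]
    rw [h1U, smul_dotProduct, ← hbU i0 hi01, hbd (nu i0) k]
    by_cases h : k = nu i0
    · rw [if_pos h, if_pos h.symm, smul_eq_mul, mul_one]
    · rw [if_neg h, if_neg (fun hh => h hh.symm), smul_eq_mul, mul_zero]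
  -- change of basis matrices
  set E₂ : (Fin p ⊕ Fin p) ≃ Fin (2 * p) :=
    finSumFinEquiv.trans (finCongr (by omega : p + p = 2 * p)) with hE₂
  set Vm : Matrix (Fin p ⊕ Fin p) (Fin p ⊕ Fin p) ℝ := Matrix.of (fun u c => v (E₂ c) u)
    with hVm
  have hVtV : Vmᵀ * Vm = 1 := by
    ext c c'
    rw [Matrix.mul_apply]
    have hh : ∑ u, Vmᵀ c u * Vm u c' = ∑ u, v (E₂ c) u * v (E₂ c') u := rfl
    rw [hh, show ∑ u, v (E₂ c) u * v (E₂ c') u = v (E₂ c) ⬝ᵥ v (E₂ c') from rfl,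
      hortho (E₂ c) (E₂ c'), Matrix.one_apply]
    by_cases h : c = c'
    · rw [if_pos h, if_pos (congrArg E₂ h)]
    · rw [if_neg h, if_neg (fun hh2 => h (E₂.injective hh2))]
  have hVVt : Vm * Vmᵀ = 1 := mul_eq_one_comm.mp hVtV
  set Wm : Matrix (Fin (p * p)) (Fin (p * p)) ℝ := Matrix.of (fun j k => bb k j) with hWm
  have hWtW : Wmᵀ * Wm = 1 := by
    ext k l
    rw [Matrix.mul_apply]
    have hh : ∑ j, Wmᵀ k j * Wm j l = bb k ⬝ᵥ bb l := rfl
    rw [hh, hbd k l, Matrix.one_apply]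
  set Q : Matrix ((Fin p ⊕ Fin p) ⊕ Fin (p * p)) ((Fin p ⊕ Fin p) ⊕ Fin (p * p)) ℝ :=
    Matrix.fromBlocks Vm 0 0 Wm with hQ
  have hQtQ : Qᵀ * Q = 1 := by
    rw [hQ, Matrix.fromBlocks_transpose, Matrix.fromBlocks_multiply]
    simp only [Matrix.transpose_zero, Matrix.mul_zero, Matrix.zero_mul, add_zero, zero_add,
      hVtV, hWtW]
    exact Matrix.fromBlocks_one
  -- the blocks of the big matrix
  set A₁ : Matrix (Fin p ⊕ Fin p) (Fin p ⊕ Fin p) ℝ := H.lapMatrix ℝ + (p : ℝ) • 1 with hA₁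
  set D₂ : Matrix (Fin (p * p)) (Fin (p * p)) ℝ :=
    ((p : ℝ) ^ 2 - 2 * (p : ℝ) + 2) • (1 : Matrix (Fin (p * p)) (Fin (p * p)) ℝ) -
      Matrix.of (fun _ _ => (1 : ℝ)) + Nᵀ * N with hD₂
  set M : Matrix ((Fin p ⊕ Fin p) ⊕ Fin (p * p)) ((Fin p ⊕ Fin p) ⊕ Fin (p * p)) ℝ :=
    Matrix.fromBlocks A₁ (-N) (-Nᵀ) D₂ with hM
  have hA1v : ∀ i, A₁ *ᵥ v i = (μ i + p) • v i := by
    intro i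
    rw [hA₁, Matrix.add_mulVec, heig i, Matrix.smul_mulVec, Matrix.one_mulVec, ← add_smul]
  have hD2mv : ∀ w : Fin (p * p) → ℝ, D₂ *ᵥ w =
      ((p : ℝ) ^ 2 - 2 * (p : ℝ) + 2) • w - (∑ j, w j) • (fun _ => (1:ℝ)) +
        Nᵀ *ᵥ (N *ᵥ w) := by
    intro w
    rw [hD₂, Matrix.add_mulVec, Matrix.sub_mulVec, Matrix.smul_mulVec, Matrix.one_mulVec,
      ← Matrix.mulVec_mulVec]
    congr 2
    funext k
    simp only [Matrix.mulVec, dotProduct, Matrix.of_apply, one_mul, Pi.smul_apply, smul_eq_mul,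
      mul_one]
  set dE : Fin (p * p) → ℝ := fun k => if k = nu i0 then 2 else
      if k.1 < 2 * p ∧ k.1 ≠ 1 then (p:ℝ)^2 - p + 2 else (p:ℝ)^2 - 2*(p:ℝ) + 2 with hdE
  have hdE0 : dE (nu i0) = 2 := by rw [hdE]; dsimp only; rw [if_pos rfl]
  have hnu01 : (nu i0).1 = 0 := rfl
  have hnu11 : (nu i1).1 = 1 := rfl
  have hD2U : ∀ i, i ≠ i1 → D₂ *ᵥ U i = dE (nu i) • U i := by
    intro i hi
    rw [hU]; dsimp only
    rw [Matrix.mulVec_smul]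
    rw [smul_comm]
    congr 1
    rw [hD2mv, hNtsum (v i), hvtot i, hFlam i, Matrix.mulVec_smul]
    by_cases h0 : i = i0
    · subst h0
      rw [if_pos rfl, mul_one, hdE0, hNtv0, hlam]
      dsimp only
      rw [if_pos rfl]
      funext j
      simp only [Pi.add_apply, Pi.sub_apply, Pi.smul_apply, smul_eq_mul, mul_one]
      have hs' := hs2psq
      have hne := ne_of_gt hs2p
      generalize hgen : Real.sqrt (2 * (p:ℝ)) = s at hs' hne ⊢
      field_simp
      nlinarith [hs']
    · rw [if_neg h0]
      simp only [mul_zero, zero_smul, sub_zero]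
      rw [hlam]
      dsimp only
      rw [if_neg h0, if_neg hi]
      have hdEi : dE (nu i) = (p:ℝ)^2 - p + 2 := by
        rw [hdE]
        dsimp only
        rw [if_neg, if_pos]
        · exact ⟨i.2, fun hval => hi (Fin.ext hval)⟩
        · intro hh
          apply h0
          apply Fin.ext
          have := congrArg Fin.val hh
          simpa using this
      rw [hdEi]
      funext j
      simp only [Pi.add_apply, Pi.smul_apply, smul_eq_mul]
      ring
  have hNb0 : ∀ l, ¬(l.1 < 2 * p ∧ l.1 ≠ 1) → N *ᵥ bb l = 0 := by
    intro l hl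
    have hcol : Vmᵀ *ᵥ (N *ᵥ bb l) = 0 := by
      funext c
      have hh : (Vmᵀ *ᵥ (N *ᵥ bb l)) c = v (E₂ c) ⬝ᵥ (N *ᵥ bb l) := rfl
      rw [hh, ← hdotmv (E₂ c) (bb l), hNb (E₂ c) l]
      by_cases h : l = nu (E₂ c)
      · have hval : l.1 = (E₂ c).1 := congrArg Fin.val h
        push_neg at hl
        have h1 : (E₂ c).1 = 1 := by
          rw [← hval]
          exact hl (hval ▸ (E₂ c).2)
        have hE1 : E₂ c = i1 := Fin.ext h1
        rw [if_pos h, hsB]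
        dsimp only
        rw [if_pos hE1]
        rfl
      · rw [if_neg h]; rfl
    have hy : N *ᵥ bb l = (Vm * Vmᵀ) *ᵥ (N *ᵥ bb l) := by rw [hVVt, Matrix.one_mulVec]
    rw [hy, ← Matrix.mulVec_mulVec, hcol, Matrix.mulVec_zero]
  have hsumb : ∀ l, l ≠ nu i0 → ∑ j, bb l j = 0 := by
    intro l hl
    have hh : ∑ j, bb l j = (fun _ => (1:ℝ)) ⬝ᵥ bb l := by
      simp [dotProduct]
    rw [hh, h1b l, if_neg hl]
  have hD2b : ∀ l, ¬(l.1 < 2 * p ∧ l.1 ≠ 1) →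
      D₂ *ᵥ bb l = ((p:ℝ)^2 - 2*(p:ℝ) + 2) • bb l := by
    intro l hl
    have hlnu : l ≠ nu i0 := by
      intro h
      apply hl
      rw [h]
      exact ⟨i0.2, by rw [hnu01]; norm_num⟩
    rw [hD2mv, hNb0 l hl, Matrix.mulVec_zero, hsumb l hlnu, zero_smul, sub_zero, add_zero]
  have hbD2 : ∀ k l, bb k ⬝ᵥ (D₂ *ᵥ bb l) = if k = l then dE k else 0 := by
    intro k l
    by_cases hls : l.1 < 2 * p ∧ l.1 ≠ 1
    · have hii1 : (⟨l.1, hls.1⟩ : Fin (2 * p)) ≠ i1 := Fin.ne_of_val_ne hls.2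
      have hnul : nu ⟨l.1, hls.1⟩ = l := Fin.ext rfl
      have hbl : bb l = U ⟨l.1, hls.1⟩ := hbU _ hii1
      rw [hbl, hD2U _ hii1, hnul, dotProduct_smul, ← hbl, hbd k l]
      by_cases h : k = l
      · rw [if_pos h, if_pos h, smul_eq_mul, mul_one, h]
      · rw [if_neg h, if_neg h, smul_eq_mul, mul_zero]
    · rw [hD2b l hls, dotProduct_smul, hbd k l]
      by_cases h : k = l
      · rw [if_pos h, if_pos h, smul_eq_mul, mul_one]
        subst h
        rw [hdE]
        dsimp only
        rw [if_neg, if_neg hls]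
        intro hh
        apply hls
        rw [hh]
        exact ⟨i0.2, by rw [hnu01]; norm_num⟩
      · rw [if_neg h, if_neg h, smul_eq_mul, mul_zero]
  -- the four blocks of the conjugated matrix
  set BB : Matrix (Fin p ⊕ Fin p) (Fin (p * p)) ℝ :=
    Matrix.of (fun c k => -(if k = nu (E₂ c) then sB (E₂ c) else 0)) with hBB
  have hblock1 : Vmᵀ * A₁ * Vm = Matrix.diagonal (fun c => μ (E₂ c) + p) := by
    ext c c'
    rw [trip]
    have hcol : (A₁ *ᵥ fun u => Vm u c') = A₁ *ᵥ v (E₂ c') := rfl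
    rw [hcol, hA1v (E₂ c')]
    have hdot : (fun u => Vm u c) ⬝ᵥ ((μ (E₂ c') + ↑p) • v (E₂ c'))
        = (μ (E₂ c') + ↑p) * (v (E₂ c) ⬝ᵥ v (E₂ c')) := by
      rw [dotProduct_smul]; rfl
    rw [hdot, hortho (E₂ c) (E₂ c'), Matrix.diagonal_apply]
    by_cases h : c = c'
    · rw [if_pos (congrArg E₂ h), if_pos h, mul_one, h]
    · rw [if_neg (fun hh => h (E₂.injective hh)), if_neg h, mul_zero]
  have hblock2 : Vmᵀ * (-N) * Wm = BB := by
    ext c k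
    rw [trip]
    have hcol : ((-N) *ᵥ fun u => Wm u k) = (-N) *ᵥ bb k := rfl
    rw [hcol, Matrix.neg_mulVec]
    have hdot : (fun u => Vm u c) ⬝ᵥ (-(N *ᵥ bb k)) = -(v (E₂ c) ⬝ᵥ (N *ᵥ bb k)) := by
      rw [dotProduct_neg]; rfl
    rw [hdot, ← hdotmv (E₂ c) (bb k), hNb (E₂ c) k]
    rfl
  have hblock3 : Wmᵀ * (-Nᵀ) * Vm = BBᵀ := by
    ext k c
    rw [trip]
    have hcol : ((-Nᵀ) *ᵥ fun u => Vm u c) = (-Nᵀ) *ᵥ v (E₂ c) := rfl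
    rw [hcol, Matrix.neg_mulVec]
    have hdot : (fun u => Wm u k) ⬝ᵥ (-(Nᵀ *ᵥ v (E₂ c))) = -(bb k ⬝ᵥ (Nᵀ *ᵥ v (E₂ c))) := by
      rw [dotProduct_neg]; rfl
    rw [hdot, dotProduct_comm, hNb (E₂ c) k]
    rfl
  have hblock4 : Wmᵀ * D₂ * Wm = Matrix.diagonal dE := by
    ext k l
    rw [trip]
    have hcol : (D₂ *ᵥ fun u => Wm u l) = D₂ *ᵥ bb l := rfl
    have hrow : (fun u => Wm u k) ⬝ᵥ (D₂ *ᵥ bb l) = bb k ⬝ᵥ (D₂ *ᵥ bb l) := rfl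
    rw [hcol, hrow, hbD2 k l, Matrix.diagonal_apply]
  have hQMQ : Qᵀ * M * Q =
      Matrix.fromBlocks (Matrix.diagonal (fun c => μ (E₂ c) + p)) BB BBᵀ
        (Matrix.diagonal dE) := by
    rw [hQ, hM, Matrix.fromBlocks_transpose, Matrix.fromBlocks_multiply,
      Matrix.fromBlocks_multiply]
    simp only [Matrix.transpose_zero, Matrix.mul_zero, Matrix.zero_mul, add_zero, zero_add]
    rw [hblock1, hblock2, hblock3, hblock4]
  -- determinant is preserved by the conjugation
  have hdQ : Qᵀ.det * Q.det = 1 := by rw [← Matrix.det_mul, hQtQ, Matrix.det_one]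
  have e2 : Qᵀ * ((x • (1 : Matrix ((Fin p ⊕ Fin p) ⊕ Fin (p * p))
      ((Fin p ⊕ Fin p) ⊕ Fin (p * p)) ℝ)) - M) * Q = (x • 1) - Qᵀ * M * Q := by
    rw [Matrix.mul_sub, Matrix.sub_mul, Matrix.mul_smul, Matrix.mul_one, Matrix.smul_mul,
      hQtQ]
  have e1 : ((x • (1 : Matrix ((Fin p ⊕ Fin p) ⊕ Fin (p * p))
      ((Fin p ⊕ Fin p) ⊕ Fin (p * p)) ℝ)) - M).det
      = ((x • 1) - Qᵀ * M * Q).det := by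
    rw [← e2, Matrix.det_mul, Matrix.det_mul]
    refine Eq.symm ?_
    calc Qᵀ.det * ((x • 1) - M).det * Q.det
        = ((x • 1) - M).det * (Qᵀ.det * Q.det) := by ring
      _ = ((x • 1) - M).det := by rw [hdQ, mul_one]
  rw [e1, hQMQ]
  -- rewrite x•1 - fromBlocks as a fromBlocks matrix
  have hds1 : (x • (1 : Matrix (Fin p ⊕ Fin p) (Fin p ⊕ Fin p) ℝ)) -
      Matrix.diagonal (fun c => μ (E₂ c) + p) = Matrix.diagonal (fun c => x - (μ (E₂ c) + p)) := by
    rw [← Matrix.diagonal_one, ← Matrix.diagonal_smul, Matrix.diagonal_sub]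
    congr 1
    funext c
    simp
  have hds2 : (x • (1 : Matrix (Fin (p * p)) (Fin (p * p)) ℝ)) -
      Matrix.diagonal dE = Matrix.diagonal (fun k => x - dE k) := by
    rw [← Matrix.diagonal_one, ← Matrix.diagonal_smul, Matrix.diagonal_sub]
    congr 1
    funext k
    simp
  have hGG : (x • (1 : Matrix ((Fin p ⊕ Fin p) ⊕ Fin (p * p))
        ((Fin p ⊕ Fin p) ⊕ Fin (p * p)) ℝ)) -
      Matrix.fromBlocks (Matrix.diagonal (fun c => μ (E₂ c) + p)) BB BBᵀ (Matrix.diagonal dE)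
      = Matrix.fromBlocks (Matrix.diagonal (fun c => x - (μ (E₂ c) + p))) (-BB) (-BBᵀ)
        (Matrix.diagonal (fun k => x - dE k)) := by
    rw [← Matrix.fromBlocks_one, Matrix.fromBlocks_smul, sub_eq_add_neg,
      Matrix.fromBlocks_neg, Matrix.fromBlocks_add]
    simp only [smul_zero, zero_add, ← sub_eq_add_neg, zero_sub]
    rw [hds1, hds2]
  rw [hGG]
  -- reindex to a block-diagonal form
  have hrest : ∀ t : Fin (p * p - 2 * p), 2 * p + t.1 < p * p := by
    intro t; have := t.2; omega
  set f : ((Fin 2 × (Fin p ⊕ Fin p)) ⊕ Fin (p * p - 2 * p)) → ((Fin p ⊕ Fin p) ⊕ Fin (p * p)) :=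
    Sum.elim (fun ic => if ic.1 = (0 : Fin 2) then Sum.inl ic.2 else Sum.inr (nu (E₂ ic.2)))
      (fun t => Sum.inr ⟨2 * p + t.1, hrest t⟩) with hf
  have h2fin : ∀ a : Fin 2, a ≠ 0 → a = 1 := by decide
  have hnuval : ∀ i : Fin (2 * p), (nu i).1 = i.1 := fun i => rfl
  have hnuEiff : ∀ c c' : Fin p ⊕ Fin p, nu (E₂ c) = nu (E₂ c') ↔ c = c' := by
    intro c c'
    constructor
    · intro h
      have hval := congrArg Fin.val h
      rw [hnuval, hnuval] at hval
      exact E₂.injective (Fin.ext hval)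
    · intro h; rw [h]
  have hfinj : Function.Injective f := by
    rintro (⟨is, cs⟩ | ts) (⟨it, ct⟩ | tt) h <;> rw [hf] at h <;>
      simp only [Sum.elim_inl, Sum.elim_inr] at h
    · by_cases his : is = 0 <;> by_cases hit : it = 0
      · rw [if_pos his, if_pos hit, Sum.inl.injEq] at h
        rw [his, hit, h]
      · rw [if_pos his, if_neg hit] at h
        exact absurd h (by simp)
      · rw [if_neg his, if_pos hit] at h
        exact absurd h (by simp)
      · rw [if_neg his, if_neg hit, Sum.inr.injEq] at h
        rw [h2fin is his, h2fin it hit, (hnuEiff cs ct).mp h]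
    · by_cases his : is = 0
      · rw [if_pos his] at h
        exact absurd h (by simp)
      · rw [if_neg his, Sum.inr.injEq] at h
        have hval : (E₂ cs).1 = 2 * p + tt.1 := congrArg Fin.val h
        have h2 := (E₂ cs).2
        exact absurd hval (by omega)
    · by_cases hit : it = 0
      · rw [if_pos hit] at h
        exact absurd h (by simp)
      · rw [if_neg hit, Sum.inr.injEq] at h
        have hval : 2 * p + ts.1 = (E₂ ct).1 := congrArg Fin.val h
        have h2 := (E₂ ct).2
        exact absurd hval (by omega)
    · rw [Sum.inr.injEq] at h ⊢
      have hval : 2 * p + ts.1 = 2 * p + tt.1 := congrArg Fin.val h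
      exact Fin.ext (show ts.1 = tt.1 by omega)
  have hfsurj : Function.Surjective f := by
    rintro (c | k)
    · exact ⟨Sum.inl (0, c), by rw [hf]; simp⟩
    · by_cases hk : k.1 < 2 * p
      · refine ⟨Sum.inl (1, E₂.symm ⟨k.1, hk⟩), ?_⟩
        rw [hf]
        simp only [Sum.elim_inl]
        rw [if_neg (by decide : (1 : Fin 2) ≠ 0)]
        rw [Equiv.apply_symm_apply]
      · refine ⟨Sum.inr ⟨k.1 - 2 * p, by have := k.2; omega⟩, ?_⟩
        rw [hf]
        simp only [Sum.elim_inr, Sum.inr.injEq]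
        exact Fin.ext (show 2 * p + (k.1 - 2 * p) = k.1 by omega)
  set ρ : ((Fin 2 × (Fin p ⊕ Fin p)) ⊕ Fin (p * p - 2 * p)) ≃ ((Fin p ⊕ Fin p) ⊕ Fin (p * p)) :=
    Equiv.ofBijective f ⟨hfinj, hfsurj⟩ with hρ
  have hρ_apply : ∀ s, ρ s = f s := fun s => rfl
  set blk : (Fin p ⊕ Fin p) → Matrix (Fin 2) (Fin 2) ℝ := fun c =>
    !![x - (μ (E₂ c) + p), sB (E₂ c); sB (E₂ c), x - dE (nu (E₂ c))] with hblk
  have hre : (Matrix.reindex ρ.symm ρ.symm)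
      (Matrix.fromBlocks (Matrix.diagonal (fun c => x - (μ (E₂ c) + p))) (-BB) (-BBᵀ)
        (Matrix.diagonal (fun k => x - dE k)))
      = Matrix.fromBlocks (Matrix.blockDiagonal blk) 0 0
          (Matrix.diagonal (fun _ : Fin (p * p - 2 * p) => x - ((p:ℝ)^2 - 2*(p:ℝ) + 2))) := by
    ext s t
    rw [Matrix.reindex_apply, Matrix.submatrix_apply, Equiv.symm_symm, hρ_apply, hρ_apply, hf]
    rcases s with ⟨is, cs⟩ | ts <;> rcases t with ⟨it, ct⟩ | tt <;>
      simp only [Sum.elim_inl, Sum.elim_inr]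
    · by_cases his : is = 0 <;> by_cases hit : it = 0
      · rw [if_pos his, if_pos hit, Matrix.fromBlocks_apply₁₁, Matrix.fromBlocks_apply₁₁,
          Matrix.blockDiagonal_apply, Matrix.diagonal_apply, his, hit]
        by_cases h : cs = ct
        · subst h
          rw [if_pos rfl, if_pos rfl, hblk]
          norm_num
        · rw [if_neg h, if_neg h]
      · rw [if_pos his, if_neg hit, Matrix.fromBlocks_apply₁₂, Matrix.fromBlocks_apply₁₁,
          Matrix.blockDiagonal_apply, his, h2fin it hit]
        have hBBval : (-BB) cs (nu (E₂ ct)) =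
            if nu (E₂ ct) = nu (E₂ cs) then sB (E₂ cs) else 0 := by
          rw [hBB]; simp
        rw [hBBval]
        by_cases h : cs = ct
        · subst h
          rw [if_pos rfl, if_pos rfl, hblk]
          norm_num
        · rw [if_neg (fun hh => h ((hnuEiff ct cs).mp hh).symm), if_neg h]
      · rw [if_neg his, if_pos hit, Matrix.fromBlocks_apply₂₁, Matrix.fromBlocks_apply₁₁,
          Matrix.blockDiagonal_apply, hit, h2fin is his]
        have hBBval : (-BBᵀ) (nu (E₂ cs)) ct =
            if nu (E₂ cs) = nu (E₂ ct) then sB (E₂ ct) else 0 := by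
          rw [hBB]; simp [Matrix.transpose_apply]
        rw [hBBval]
        by_cases h : cs = ct
        · subst h
          rw [if_pos rfl, if_pos rfl, hblk]
          norm_num
        · rw [if_neg (fun hh => h ((hnuEiff cs ct).mp hh)), if_neg h]
      · rw [if_neg his, if_neg hit, Matrix.fromBlocks_apply₂₂, Matrix.fromBlocks_apply₁₁,
          Matrix.blockDiagonal_apply, Matrix.diagonal_apply, h2fin is his, h2fin it hit]
        by_cases h : cs = ct
        · subst h
          rw [if_pos rfl, if_pos rfl, hblk]
          norm_num
        · rw [if_neg (fun hh => h ((hnuEiff cs ct).mp hh)), if_neg h]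
    · rw [Matrix.fromBlocks_apply₁₂, Matrix.zero_apply]
      by_cases his : is = 0
      · rw [if_pos his, Matrix.fromBlocks_apply₁₂]
        have hBBval : (-BB) cs (⟨2 * p + tt.1, hrest tt⟩ : Fin (p * p)) =
            if (⟨2 * p + tt.1, hrest tt⟩ : Fin (p * p)) = nu (E₂ cs)
              then sB (E₂ cs) else 0 := by
          rw [hBB]; simp
        rw [hBBval, if_neg]
        intro hh
        have hval := congrArg Fin.val hh
        rw [hnuval] at hval
        simp only [Fin.val_mk] at hval
        have h2 := (E₂ cs).2
        omega
      · rw [if_neg his, Matrix.fromBlocks_apply₂₂, Matrix.diagonal_apply, if_neg]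
        intro hh
        have hval := congrArg Fin.val hh
        rw [hnuval] at hval
        simp only [Fin.val_mk] at hval
        have h2 := (E₂ cs).2
        omega
    · rw [Matrix.fromBlocks_apply₂₁, Matrix.zero_apply]
      by_cases hit : it = 0
      · rw [if_pos hit, Matrix.fromBlocks_apply₂₁]
        have hBBval : (-BBᵀ) (⟨2 * p + ts.1, hrest ts⟩ : Fin (p * p)) ct =
            if (⟨2 * p + ts.1, hrest ts⟩ : Fin (p * p)) = nu (E₂ ct)
              then sB (E₂ ct) else 0 := by
          rw [hBB]; simp [Matrix.transpose_apply]
        rw [hBBval, if_neg]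
        intro hh
        have hval := congrArg Fin.val hh
        rw [hnuval] at hval
        simp only [Fin.val_mk] at hval
        have h2 := (E₂ ct).2
        omega
      · rw [if_neg hit, Matrix.fromBlocks_apply₂₂, Matrix.diagonal_apply, if_neg]
        intro hh
        have hval := congrArg Fin.val hh
        rw [hnuval] at hval
        simp only [Fin.val_mk] at hval
        have h2 := (E₂ ct).2
        omega
    · rw [Matrix.fromBlocks_apply₂₂, Matrix.fromBlocks_apply₂₂, Matrix.diagonal_apply,
        Matrix.diagonal_apply]
      by_cases h : ts = tt
      · subst h
        rw [if_pos rfl, if_pos rfl]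
        have hdEval : dE (⟨2 * p + ts.1, hrest ts⟩ : Fin (p * p)) =
            (p:ℝ)^2 - 2*(p:ℝ) + 2 := by
          rw [hdE]
          dsimp only
          rw [if_neg, if_neg]
          · intro hh
            rcases hh with ⟨hh1, _⟩
            omega
          · intro hh
            have hval := congrArg Fin.val hh
            rw [hnu01] at hval
            simp only [Fin.val_mk] at hval
            omega
        rw [hdEval]
      · rw [if_neg h, if_neg (fun hh => h (Fin.ext (show ts.1 = tt.1 by
          have hval := congrArg Fin.val hh
          simp only [Fin.val_mk] at hval
          omega)))]
  -- compute the determinant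
  rw [← Matrix.det_reindex_self ρ.symm
    (Matrix.fromBlocks (Matrix.diagonal (fun c => x - (μ (E₂ c) + p))) (-BB) (-BBᵀ)
      (Matrix.diagonal (fun k => x - dE k))), hre, Matrix.det_fromBlocks_zero₁₂,
    Matrix.det_blockDiagonal, Matrix.det_diagonal]
  set F : Fin (2 * p) → ℝ := fun i => (x - (μ i + p)) * (x - dE (nu i)) - sB i * sB i with hF
  have hdet2 : ∀ c, (blk c).det = F (E₂ c) := by
    intro c
    rw [hblk]
    dsimp only
    rw [Matrix.det_fin_two_of, hF]
  have hprod1 : ∏ c : Fin p ⊕ Fin p, (blk c).det = ∏ i : Fin (2 * p), F i := by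
    rw [Finset.prod_congr rfl (fun c _ => hdet2 c), ← E₂.prod_comp F]
  have hmem1 : i1 ∈ Finset.univ.erase i0 :=
    Finset.mem_erase.mpr ⟨fun h => hi01 h.symm, Finset.mem_univ _⟩
  have hsplit : ∏ i : Fin (2 * p), F i
      = F i0 * (F i1 * ∏ i ∈ (Finset.univ.erase i0).erase i1, F i) := by
    rw [← Finset.mul_prod_erase Finset.univ F (Finset.mem_univ i0),
      ← Finset.mul_prod_erase (Finset.univ.erase i0) F hmem1]
  have hFi0 : F i0 = x * (x - ((p:ℝ) + 2)) := by
    rw [hF]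
    dsimp only
    rw [hμ0', hdE0, hsB]
    dsimp only
    rw [if_neg hi01, hsl]
    dsimp only
    rw [if_pos rfl]
    nlinarith [hs2psq]
  have hdEnu1 : dE (nu i1) = (p:ℝ)^2 - 2*(p:ℝ) + 2 := by
    rw [hdE]
    dsimp only
    rw [if_neg, if_neg]
    · simp [hnu11]
    · intro hh
      have hval := congrArg Fin.val hh
      rw [hnu11, hnu01] at hval
      exact absurd hval (by norm_num)
  have hFi1 : F i1 = (x - ((p:ℝ) + 2 * (r:ℝ))) * (x - ((p:ℝ)^2 - 2*(p:ℝ) + 2)) := by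
    rw [hF]
    dsimp only
    rw [hμ1', hdEnu1, hsB]
    dsimp only
    rw [if_pos rfl]
    ring
  have hFq : ∀ i ∈ (Finset.univ.erase i0).erase i1,
      F i = x ^ 2 - ((p : ℝ) ^ 2 + μ i + 2) * x +
        ((p : ℝ) ^ 2 - (p : ℝ) + 2) * ((p : ℝ) + μ i) - (p : ℝ) := by
    intro i hi
    have hi1' : i ≠ i1 := (Finset.mem_erase.mp hi).1
    have hi0' : i ≠ i0 := (Finset.mem_erase.mp (Finset.mem_erase.mp hi).2).1
    have hdEi : dE (nu i) = (p:ℝ)^2 - p + 2 := by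
      rw [hdE]
      dsimp only
      rw [if_neg, if_pos]
      · exact ⟨i.2, fun hval => hi1' (Fin.ext hval)⟩
      · intro hh
        have hval := congrArg Fin.val hh
        rw [hnuval, hnu01] at hval
        exact hi0' (Fin.ext hval)
    have hsBi : sB i = Real.sqrt p := by
      rw [hsB]
      dsimp only
      rw [if_neg hi1', hsl]
      dsimp only
      rw [if_neg hi0']
    rw [hF]
    dsimp only
    rw [hdEi, hsBi, hspsq]
    ring
  rw [hprod1, hsplit, hFi0, hFi1, Finset.prod_congr rfl hFq, Finset.prod_const,
    Finset.card_univ, Fintype.card_fin, pow_succ]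
  ring
end

section
/- Let p ≥ 2 and let H be a spanning r-regular subgraph of K_{p,p} with r ≥ 2, so H has 2p vertices and m = pr edges. Let μ_3(H), …, μ_{2p}(H) be the Laplacian eigenvalues of H remaining after removing one copy of 0 and one copy of 2r. Then the characteristic polynomial of the Laplacian of [S(H)]^{K_{p,p}}, namely of the block matrix [[L(K_{p,p}) + r·I_{2p}, −B(H)],[−B(H)ᵀ, 2·I_m]], equals x·(x − (r+2))·(x − (r+2p))·(x − 2)^{m−2p+1} · ∏_{i=3}^{2p} ( x² − (r + p + 2)x + 2p + μ_i(H) ). -/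
open Matrix SimpleGraph

private lemma fromBlocks_sub' {l m : Type} [Fintype l] [Fintype m] {α : Type} [AddGroup α]
    (A : Matrix l l α) (B : Matrix l m α) (C : Matrix m l α) (D : Matrix m m α)
    (A' : Matrix l l α) (B' : Matrix l m α) (C' : Matrix m l α) (D' : Matrix m m α) :
    fromBlocks A B C D - fromBlocks A' B' C' D' =
      fromBlocks (A - A') (B - B') (C - C') (D - D') := by
  ext i j
  cases i <;> cases j <;> rfl

/-- `L`-characteristic polynomial of $[S(H)]^{K_{p,p}}$,
where $H$ is a spanning $r$-regular subgraph of $K_{p,p}$. -/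
theorem stmt_9 (p r : ℕ) (hp : 2 ≤ p) (hr : 2 ≤ r)
    (H : SimpleGraph (Fin p ⊕ Fin p)) [DecidableRel H.Adj] [Fintype H.edgeSet]
    (hH : H.IsRegularOfDegree r)
    (hsub : H ≤ completeBipartiteGraph (Fin p) (Fin p))
    (e : Fin (p * r) ≃ H.edgeFinset)
    (v : Fin (2 * p) → (Fin p ⊕ Fin p) → ℝ) (μ : Fin (2 * p) → ℝ)
    (hortho : ∀ i j, v i ⬝ᵥ v j = if i = j then 1 else 0)
    (heig : ∀ i, (H.lapMatrix ℝ).mulVec (v i) = μ i • v i)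
    (hv0 : ∀ u, v ⟨0, by omega⟩ u = 1 / Real.sqrt (2 * p))
    (hv1 : v ⟨1, by omega⟩ =
      Sum.elim (fun _ => 1 / Real.sqrt (2 * p)) (fun _ => -(1 / Real.sqrt (2 * p))))
    (hμ0 : μ ⟨0, by omega⟩ = 0) (hμ1 : μ ⟨1, by omega⟩ = 2 * r)
    (x : ℝ) :
    (x • (1 : Matrix ((Fin p ⊕ Fin p) ⊕ Fin (p * r)) ((Fin p ⊕ Fin p) ⊕ Fin (p * r)) ℝ) -
        Matrix.fromBlocks
          ((completeBipartiteGraph (Fin p) (Fin p)).lapMatrix ℝ + (r : ℝ) • 1)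
          (-(incMat H e)) (-(incMat H e)ᵀ)
          ((2 : ℝ) • (1 : Matrix (Fin (p * r)) (Fin (p * r)) ℝ))).det
      = x * (x - ((r : ℝ) + 2)) * (x - ((r : ℝ) + 2 * (p : ℝ))) *
          (x - 2) ^ (p * r - 2 * p + 1) *
          ∏ i ∈ (Finset.univ.erase (⟨0, by omega⟩ : Fin (2 * p))).erase ⟨1, by omega⟩,
            (x ^ 2 - ((r : ℝ) + (p : ℝ) + 2) * x + 2 * (p : ℝ) + μ i) := by
  classical
  have hp0 : 0 < p := by omega
  have h2p : 2 * p ≤ p * r := by nlinarith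
  set K := completeBipartiteGraph (Fin p) (Fin p) with hK
  set B := incMat H e with hB
  set i0 : Fin (2 * p) := ⟨0, by omega⟩ with hi0
  set i1 : Fin (2 * p) := ⟨1, by omega⟩ with hi1
  set c0 : ℝ := 1 / Real.sqrt (2 * p) with hc0def
  have hc0 : c0 ≠ 0 := by
    have : (0:ℝ) < Real.sqrt (2 * p) := Real.sqrt_pos.mpr (by positivity)
    positivity
  have hne01 : i1 ≠ i0 := by simp [hi0, hi1, Fin.ext_iff]
  -- the product index set
  set E : Finset (Fin (2 * p)) := (Finset.univ.erase i0).erase i1 with hE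
  have hmem1 : i1 ∈ Finset.univ.erase i0 := Finset.mem_erase.mpr ⟨hne01, Finset.mem_univ _⟩
  have hcardE : E.card = 2 * p - 2 := by
    rw [hE, Finset.card_erase_of_mem hmem1, Finset.card_erase_of_mem (Finset.mem_univ _),
      Finset.card_univ, Fintype.card_fin]
    omega
  -- degrees and neighbor sets of K_{p,p}
  have hNl : ∀ a : Fin p, K.neighborFinset (Sum.inl a)
      = Finset.univ.map ⟨Sum.inr, Sum.inr_injective⟩ := by
    intro a; ext u
    cases u <;> simp [hK, mem_neighborFinset]
  have hNr : ∀ b : Fin p, K.neighborFinset (Sum.inr b)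
      = Finset.univ.map ⟨Sum.inl, Sum.inl_injective⟩ := by
    intro b; ext u
    cases u <;> simp [hK, mem_neighborFinset]
  have hdeg : ∀ u, K.degree u = p := by
    intro u
    cases u with
    | inl a => rw [degree, hNl a, Finset.card_map, Finset.card_univ, Fintype.card_fin]
    | inr b => rw [degree, hNr b, Finset.card_map, Finset.card_univ, Fintype.card_fin]
  -- incidence matrix identity : B * Bᵀ = 2r • 1 - L(H)
  have hBBt : B * Bᵀ = (2 * (r:ℝ)) • 1 - H.lapMatrix ℝ := by
    have hinc : ∀ (u : Fin p ⊕ Fin p) (s : Sym2 (Fin p ⊕ Fin p)), s ∈ H.edgeSet →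
        H.incMatrix ℝ u s = if u ∈ s then 1 else 0 := by
      intro u s hs
      rw [incMatrix_apply']
      simp [SimpleGraph.incidenceSet, hs]
    have key : B * Bᵀ = H.incMatrix ℝ * (H.incMatrix ℝ)ᵀ := by
      ext u w
      rw [Matrix.mul_apply, Matrix.mul_apply]
      have h1 : ∀ j : Fin (p*r), B u j * Bᵀ j w
          = (fun s : H.edgeFinset => H.incMatrix ℝ u s * H.incMatrix ℝ w s) (e j) := by
        intro j
        have hs : ((e j : Sym2 (Fin p ⊕ Fin p))) ∈ H.edgeSet :=
          SimpleGraph.mem_edgeFinset.mp (e j).2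
        simp only [hB, incMat, Matrix.transpose_apply, Matrix.of_apply,
          hinc u _ hs, hinc w _ hs]
      rw [Finset.sum_congr rfl (fun j _ => h1 j), Equiv.sum_comp e
        (fun s : H.edgeFinset => H.incMatrix ℝ u s * H.incMatrix ℝ w s),
        Finset.sum_coe_sort H.edgeFinset (fun s => H.incMatrix ℝ u s * H.incMatrix ℝ w s)]
      simp only [Matrix.transpose_apply]
      refine Finset.sum_subset (Finset.subset_univ _) (fun s _ hs => ?_)
      rw [H.incMatrix_of_notMem_incidenceSet
        (fun hmem => hs (SimpleGraph.mem_edgeFinset.mpr hmem.1)), zero_mul]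
    rw [key, incMatrix_mul_transpose]
    ext u w
    by_cases huw : u = w
    · subst huw
      simp [Matrix.one_apply, lapMatrix, degMatrix, hH u]
      ring
    · simp [Matrix.one_apply_ne huw, lapMatrix, degMatrix, Matrix.diagonal_apply_ne _ huw, huw]
  -- sums of eigenvector coordinates vanish for j ∉ {i0, i1}
  have hsums : ∀ j, j ≠ i0 → j ≠ i1 →
      (∑ a, v j (Sum.inl a)) = 0 ∧ (∑ b, v j (Sum.inr b)) = 0 := by
    intro j h0 h1
    have e0 := hortho j i0
    have e1 := hortho j i1
    rw [if_neg h0] at e0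
    rw [if_neg h1] at e1
    rw [dotProduct, Fintype.sum_sum_type] at e0 e1
    simp only [hv0, hv1, Sum.elim_inl, Sum.elim_inr, ← Finset.sum_mul, mul_neg,
      Finset.sum_neg_distrib] at e0 e1
    have hA : ((∑ a, v j (Sum.inl a)) + ∑ b, v j (Sum.inr b)) * c0 = 0 := by
      rw [add_mul]; linarith
    have hB' : ((∑ a, v j (Sum.inl a)) - ∑ b, v j (Sum.inr b)) * c0 = 0 := by
      rw [sub_mul]; linarith
    have hA0 := (mul_eq_zero.mp hA).resolve_right hc0
    have hB0 := (mul_eq_zero.mp hB').resolve_right hc0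
    constructor <;> linarith
  -- Laplacian of K_{p,p} eigenvalues
  set κ : Fin (2 * p) → ℝ := fun j => if j = i0 then 0 else if j = i1 then 2*(p:ℝ) else p
    with hκ
  have hlapK : ∀ j, (K.lapMatrix ℝ) *ᵥ (v j) = κ j • v j := by
    intro j
    by_cases h0 : j = i0
    · subst h0
      funext u
      rw [lapMatrix_mulVec_apply]
      simp only [hv0, Finset.sum_const, hdeg u, nsmul_eq_mul, Pi.smul_apply, smul_eq_mul,
        hκ, if_pos rfl]
      have : (K.neighborFinset u).card = p := hdeg u
      rw [this]
      ring
    · by_cases h1 : j = i1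
      · subst h1
        funext u
        rw [lapMatrix_mulVec_apply]
        cases u with
        | inl a =>
          rw [hNl a, Finset.sum_map]
          simp only [hv1, Sum.elim_inl, Sum.elim_inr, Function.Embedding.coeFn_mk,
            Finset.sum_const, Finset.card_univ, Fintype.card_fin, nsmul_eq_mul,
            hdeg, Pi.smul_apply, smul_eq_mul, hκ, if_neg hne01, if_pos rfl]
          push_cast
          ring
        | inr b =>
          rw [hNr b, Finset.sum_map]
          simp only [hv1, Sum.elim_inl, Sum.elim_inr, Function.Embedding.coeFn_mk,
            Finset.sum_const, Finset.card_univ, Fintype.card_fin, nsmul_eq_mul,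
            hdeg, Pi.smul_apply, smul_eq_mul, hκ, if_neg hne01, if_pos rfl]
          push_cast
          ring
      · obtain ⟨hSl, hSr⟩ := hsums j h0 h1
        funext u
        rw [lapMatrix_mulVec_apply]
        cases u with
        | inl a =>
          rw [hNl a, Finset.sum_map]
          simp only [Function.Embedding.coeFn_mk, hSr, hdeg, Pi.smul_apply, smul_eq_mul,
            hκ, if_neg h0, if_neg h1]
          ring
        | inr b =>
          rw [hNr b, Finset.sum_map]
          simp only [Function.Embedding.coeFn_mk, hSl, hdeg, Pi.smul_apply, smul_eq_mul,
            hκ, if_neg h0, if_neg h1]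
          ring
  -- the main computation for y ≠ 2
  have main : ∀ y : ℝ, y ≠ 2 →
      (fromBlocks (y • 1 - (K.lapMatrix ℝ + (r : ℝ) • 1)) B Bᵀ
        ((y - 2) • (1 : Matrix (Fin (p * r)) (Fin (p * r)) ℝ))).det
      = y * (y - ((r : ℝ) + 2)) * (y - ((r : ℝ) + 2 * (p : ℝ))) *
          (y - 2) ^ (p * r - 2 * p + 1) *
          ∏ i ∈ E, (y ^ 2 - ((r : ℝ) + (p : ℝ) + 2) * y + 2 * (p : ℝ) + μ i) := by
    intro y hy
    have hy2 : y - 2 ≠ 0 := sub_ne_zero.mpr hy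
    have hDmul : ((y-2) • (1 : Matrix (Fin (p*r)) (Fin (p*r)) ℝ)) * ((y-2)⁻¹ • 1) = 1 := by
      rw [Matrix.smul_mul, Matrix.mul_smul, Matrix.mul_one, smul_smul,
        mul_inv_cancel₀ hy2, one_smul]
    have hDmul' : ((y-2)⁻¹ • (1 : Matrix (Fin (p*r)) (Fin (p*r)) ℝ)) * ((y-2) • 1) = 1 := by
      rw [Matrix.smul_mul, Matrix.mul_smul, Matrix.mul_one, smul_smul,
        inv_mul_cancel₀ hy2, one_smul]
    haveI hinv : Invertible ((y-2) • (1 : Matrix (Fin (p*r)) (Fin (p*r)) ℝ)) :=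
      ⟨(y-2)⁻¹ • 1, hDmul', hDmul⟩
    rw [Matrix.det_fromBlocks₂₂]
    have hIof : ⅟((y-2) • (1 : Matrix (Fin (p*r)) (Fin (p*r)) ℝ)) = (y-2)⁻¹ • (1 : Matrix (Fin (p*r)) (Fin (p*r)) ℝ) := invOf_eq_right_inv hDmul
    set S : Matrix (Fin p ⊕ Fin p) (Fin p ⊕ Fin p) ℝ :=
      y • (1 : Matrix (Fin p ⊕ Fin p) (Fin p ⊕ Fin p) ℝ) - (K.lapMatrix ℝ + (r:ℝ) • (1 : Matrix (Fin p ⊕ Fin p) (Fin p ⊕ Fin p) ℝ)) - B * ((y-2)⁻¹ • (1 : Matrix (Fin (p*r)) (Fin (p*r)) ℝ)) * Bᵀ with hS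
    set lam : Fin (2*p) → ℝ := fun j => y - r - κ j - (y-2)⁻¹ * (2*r - μ j) with hlam
    have hSv : ∀ j, S *ᵥ v j = lam j • v j := by
      intro j
      have hBB : B * ((y-2)⁻¹ • (1 : Matrix (Fin (p*r)) (Fin (p*r)) ℝ)) * Bᵀ
          = (y-2)⁻¹ • ((2*(r:ℝ)) • (1 : Matrix (Fin p ⊕ Fin p) (Fin p ⊕ Fin p) ℝ) - H.lapMatrix ℝ) := by
        rw [Matrix.mul_smul, Matrix.mul_one, Matrix.smul_mul, hBBt]
      rw [hS, hBB]
      simp only [sub_mulVec, add_mulVec, smul_mulVec, one_mulVec, hlapK, heig]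
      funext u
      simp only [Pi.sub_apply, Pi.add_apply, Pi.smul_apply, smul_eq_mul, hlam]
      ring
    set ε : Fin (2*p) ≃ (Fin p ⊕ Fin p) := (finCongr (two_mul p)).trans finSumFinEquiv.symm
      with hε
    set W : Matrix (Fin (2*p)) (Fin (2*p)) ℝ := Matrix.of fun i j => v i (ε j) with hW
    have hWWt : W * Wᵀ = 1 := by
      ext i j
      rw [Matrix.mul_apply]
      have h2 : ∑ k, W i k * Wᵀ k j = ∑ u, v i u * v j u :=
        Fintype.sum_equiv ε _ _ (fun k => rfl)
      have h3 := hortho i j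
      rw [dotProduct] at h3
      rw [h2, h3, Matrix.one_apply]
    have hdetW : W.det * W.det = 1 := by
      have h4 := congrArg Matrix.det hWWt
      rwa [Matrix.det_mul, Matrix.det_transpose, Matrix.det_one] at h4
    have hconj : W * (S.submatrix ε ε * Wᵀ) = Matrix.diagonal lam := by
      have hmid : S.submatrix ε ε * Wᵀ = Matrix.of fun k j => lam j * v j (ε k) := by
        ext k j
        rw [Matrix.mul_apply]
        have h5 : ∑ l, S.submatrix ε ε k l * Wᵀ l j = ∑ u, S (ε k) u * v j u :=
          Fintype.sum_equiv ε _ _ (fun l => rfl)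
        rw [h5]
        calc ∑ u, S (ε k) u * v j u = (S *ᵥ v j) (ε k) := rfl
          _ = (lam j • v j) (ε k) := congrFun (hSv j) (ε k)
          _ = (Matrix.of fun k j => lam j * v j (ε k)) k j := rfl
      rw [hmid]
      ext i j
      rw [Matrix.mul_apply]
      have h6 : ∑ k, W i k * (Matrix.of fun k j => lam j * v j (ε k)) k j
          = lam j * ∑ u, v i u * v j u := by
        rw [Finset.mul_sum]
        exact Fintype.sum_equiv ε _ _ (fun k => by simp [hW]; ring)
      rw [h6]
      have h3 := hortho i j
      rw [dotProduct] at h3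
      rw [h3]
      by_cases hij : i = j
      · subst hij; rw [Matrix.diagonal_apply_eq, if_pos rfl, mul_one]
      · rw [Matrix.diagonal_apply_ne _ hij, if_neg hij, mul_zero]
    have hdS : S.det = ∏ j, lam j := by
      have h7 := congrArg Matrix.det hconj
      rw [Matrix.det_mul, Matrix.det_mul, Matrix.det_diagonal, Matrix.det_transpose,
        Matrix.det_submatrix_equiv_self] at h7
      calc S.det = (W.det * W.det) * S.det := by rw [hdetW, one_mul]
        _ = W.det * (S.det * W.det) := by ring
        _ = ∏ j, lam j := h7
    have hDdet : ((y-2) • (1 : Matrix (Fin (p*r)) (Fin (p*r)) ℝ)).det = (y-2)^(p*r) := by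
      rw [Matrix.det_smul, Matrix.det_one, Fintype.card_fin, mul_one]
    have hSdet : (y • (1 : Matrix (Fin p ⊕ Fin p) (Fin p ⊕ Fin p) ℝ) - (K.lapMatrix ℝ + (r:ℝ) • (1 : Matrix (Fin p ⊕ Fin p) (Fin p ⊕ Fin p) ℝ)) - B * ⅟((y-2) • (1 : Matrix (Fin (p*r)) (Fin (p*r)) ℝ)) * Bᵀ).det
        = ∏ j, lam j := by
      rw [hIof]
      exact hdS
    rw [hDdet, hSdet]
    have hlam0 : (y - 2) * lam i0 = y * (y - ((r:ℝ)+2)) := by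
      simp only [hlam, hκ, hμ0, if_pos rfl, if_true, ite_true]
      field_simp
      ring
    have hlam1 : lam i1 = y - ((r:ℝ) + 2*(p:ℝ)) := by
      simp only [hlam, hκ, hμ1, if_neg hne01, if_pos rfl, if_true, ite_true]
      ring
    have hprod : ∏ i ∈ E, (y^2 - ((r:ℝ)+(p:ℝ)+2)*y + 2*(p:ℝ) + μ i)
        = (y-2)^(2*p-2) * ∏ i ∈ E, lam i := by
      rw [← hcardE, ← Finset.prod_const, ← Finset.prod_mul_distrib]
      refine Finset.prod_congr rfl (fun i hi => ?_)
      have hi1 : i ≠ i1 := (Finset.mem_erase.mp hi).1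
      have hi0 : i ≠ i0 := (Finset.mem_erase.mp (Finset.mem_erase.mp hi).2).1
      simp only [hlam, hκ, if_neg hi0, if_neg hi1]
      field_simp
      ring
    have hall : ∏ j, lam j = lam i0 * (lam i1 * ∏ i ∈ E, lam i) := by
      rw [← Finset.mul_prod_erase Finset.univ lam (Finset.mem_univ i0),
        ← Finset.mul_prod_erase _ lam hmem1]
    rw [hall, hprod]
    have hpow : (y-2)^(p*r) = (y-2)^(p*r-2*p+1) * (y-2)^(2*p-2) * (y-2) := by
      rw [← pow_add, ← pow_succ]
      congr 1
      omega
    rw [hpow, ← hlam0, ← hlam1]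
    ring
  -- rewrite the goal block matrix
  have hblock : ∀ y : ℝ,
      y • (1 : Matrix ((Fin p ⊕ Fin p) ⊕ Fin (p * r)) ((Fin p ⊕ Fin p) ⊕ Fin (p * r)) ℝ) -
        Matrix.fromBlocks (K.lapMatrix ℝ + (r : ℝ) • 1) (-B) (-Bᵀ)
          ((2 : ℝ) • (1 : Matrix (Fin (p * r)) (Fin (p * r)) ℝ))
      = fromBlocks (y • 1 - (K.lapMatrix ℝ + (r : ℝ) • 1)) B Bᵀ ((y - 2) • 1) := by
    intro y
    rw [← Matrix.fromBlocks_one, Matrix.fromBlocks_smul, fromBlocks_sub']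
    congr 1 <;> simp [sub_smul]
  -- continuity argument to extend from y ≠ 2 to all x
  have hf : Continuous fun y : ℝ =>
      (y • (1 : Matrix ((Fin p ⊕ Fin p) ⊕ Fin (p * r)) ((Fin p ⊕ Fin p) ⊕ Fin (p * r)) ℝ) -
        Matrix.fromBlocks (K.lapMatrix ℝ + (r : ℝ) • 1) (-B) (-Bᵀ)
          ((2 : ℝ) • (1 : Matrix (Fin (p * r)) (Fin (p * r)) ℝ))).det := by
    exact ((continuous_id.smul continuous_const).sub continuous_const).matrix_det
  have hg : Continuous fun y : ℝ =>
      y * (y - ((r : ℝ) + 2)) * (y - ((r : ℝ) + 2 * (p : ℝ))) *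
          (y - 2) ^ (p * r - 2 * p + 1) *
          ∏ i ∈ E, (y ^ 2 - ((r : ℝ) + (p : ℝ) + 2) * y + 2 * (p : ℝ) + μ i) := by
    fun_prop
  have hfg := Continuous.ext_on (dense_compl_singleton (2:ℝ)) hf hg
    (fun y hy => by
      rw [hblock y]
      exact main y (by simpa using hy))
  exact congrFun hfg x
end

section
/- Let H be an r-regular graph with m vertices and adjacency eigenvalues λ_1 = r, λ_2, …, λ_m. Then the characteristic polynomial of the adjacency matrix of [S(K_{1,m})]_{H}, namely of the (2m+1)×(2m+1) block matrix [[0_{(m+1)×(m+1)}, B(K_{1,m})],[B(K_{1,m})ᵀ, A(H)]], equals x·(x² − r·x − (m+1)) · ∏_{i=2}^{m} ( x² − λ_i·x − 1 ). -/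
open Matrix SimpleGraph

/-- The $(m+1)\times m$ vertex–edge incidence matrix of the star $K_{1,m}$,
with the center listed first: edge $j$ joins the center to leaf $j$. -/
def starB (m : ℕ) : Matrix (Fin (m + 1)) (Fin m) ℝ :=
  Matrix.of fun i j => if i = 0 ∨ i = j.succ then 1 else 0

/-- `A`-characteristic polynomial of $[S(K_{1,m})]_{H}$ for a
regular graph `H` on the edge set of the star. -/
theorem stmt_10 (m r : ℕ) (hm : 0 < m)
    (H : SimpleGraph (Fin m)) [DecidableRel H.Adj]
    (hH : H.IsRegularOfDegree r)
    (v : Fin m → Fin m → ℝ) (lam : Fin m → ℝ)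
    (hortho : ∀ i j, v i ⬝ᵥ v j = if i = j then 1 else 0)
    (heig : ∀ i, (H.adjMatrix ℝ).mulVec (v i) = lam i • v i)
    (hv0 : ∀ k, v ⟨0, hm⟩ k = 1 / Real.sqrt m)
    (hlam0 : lam ⟨0, hm⟩ = r)
    (x : ℝ) :
    (x • (1 : Matrix (Fin (m + 1) ⊕ Fin m) (Fin (m + 1) ⊕ Fin m) ℝ) -
        Matrix.fromBlocks 0 (starB m) (starB m)ᵀ (H.adjMatrix ℝ)).det
      = x * (x ^ 2 - (r : ℝ) * x - ((m : ℝ) + 1)) *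
          ∏ i ∈ Finset.univ.erase (⟨0, hm⟩ : Fin m),
            (x ^ 2 - lam i * x - 1) := by
  classical
  set A := H.adjMatrix ℝ with hA
  set B := starB m with hBdef
  set J : Matrix (Fin m) (Fin m) ℝ := Matrix.of fun _ _ => 1 with hJ
  set z : Fin m := ⟨0, hm⟩ with hz
  -- BᵀB = J + 1
  have hBtB : Bᵀ * B = J + 1 := by
    ext j k
    simp only [hBdef, Matrix.mul_apply, Matrix.transpose_apply, starB, Matrix.of_apply,
      Matrix.add_apply, Matrix.one_apply, hJ]
    rw [Fin.sum_univ_succ]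
    simp [Fin.succ_ne_zero, Fin.succ_inj, mul_ite, ite_mul, Finset.sum_ite_eq, eq_comm]
  -- sqrt m ≠ 0
  have hsm : Real.sqrt m ≠ 0 := by
    positivity
  -- J eigenvalues
  have hJv : ∀ i, J.mulVec (v i) = (if i = z then (m : ℝ) else 0) • v i := by
    intro i
    funext k
    have hJk : J.mulVec (v i) k = ∑ j, v i j := by
      simp [Matrix.mulVec, dotProduct, hJ]
    by_cases hi : i = z
    · subst hi
      rw [hJk]
      simp [hv0]
    · have h0 : v i ⬝ᵥ v z = 0 := by rw [hortho i z, if_neg hi]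
      have hsum : (∑ j, v i j) * (1 / Real.sqrt m) = 0 := by
        rw [Finset.sum_mul] at *
        rw [← h0]
        simp [dotProduct, hv0]
      have : (∑ j, v i j) = 0 := by
        rcases mul_eq_zero.mp hsum with h | h
        · exact h
        · exact absurd h (by simp [hsm])
      rw [hJk, this]
      simp [if_neg hi]
  -- key : the identity for y ≠ 0
  have key : ∀ y : ℝ, y ≠ 0 →
      (y • (1 : Matrix (Fin (m + 1) ⊕ Fin m) (Fin (m + 1) ⊕ Fin m) ℝ) -
        Matrix.fromBlocks 0 (starB m) (starB m)ᵀ (H.adjMatrix ℝ)).det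
      = y * (y ^ 2 - (r : ℝ) * y - ((m : ℝ) + 1)) *
          ∏ i ∈ Finset.univ.erase (⟨0, hm⟩ : Fin m),
            (y ^ 2 - lam i * y - 1) := by
    intro y hy
    have hblock : y • (1 : Matrix (Fin (m + 1) ⊕ Fin m) (Fin (m + 1) ⊕ Fin m) ℝ) -
        Matrix.fromBlocks 0 (starB m) (starB m)ᵀ (H.adjMatrix ℝ)
        = Matrix.fromBlocks (y • 1) (-B) (-Bᵀ) (y • 1 - A) := by
      ext (i | i) (j | j) <;>
        simp [Matrix.one_apply, ← hA, ← hBdef]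
    letI : Invertible (y • (1 : Matrix (Fin (m + 1)) (Fin (m + 1)) ℝ)) :=
      ⟨y⁻¹ • 1,
        by simp [Matrix.smul_mul, Matrix.mul_smul, smul_smul, inv_mul_cancel₀ hy,
          mul_inv_cancel₀ hy],
        by simp [Matrix.smul_mul, Matrix.mul_smul, smul_smul, inv_mul_cancel₀ hy,
          mul_inv_cancel₀ hy]⟩
    have hinv : ⅟ (y • (1 : Matrix (Fin (m + 1)) (Fin (m + 1)) ℝ)) = y⁻¹ • 1 := rfl
    rw [hblock, Matrix.det_fromBlocks₁₁, hinv]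
    -- Schur complement
    set N : Matrix (Fin m) (Fin m) ℝ := (y ^ 2) • 1 - y • A - (J + 1) with hN
    have hSchur : (y • 1 - A) - (-Bᵀ) * (y⁻¹ • (1 : Matrix (Fin (m + 1)) (Fin (m + 1)) ℝ)) * (-B)
        = y⁻¹ • N := by
      have h1 : (-Bᵀ) * (y⁻¹ • (1 : Matrix (Fin (m + 1)) (Fin (m + 1)) ℝ)) * (-B)
          = y⁻¹ • (J + 1) := by
        rw [Matrix.mul_smul, Matrix.mul_one, Matrix.smul_mul, Matrix.neg_mul, Matrix.mul_neg,
          neg_neg, hBtB]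
      rw [h1, hN, smul_sub, smul_sub, smul_smul, smul_smul]
      have e1 : y⁻¹ * y ^ 2 = y := by field_simp [sq]
      have e2 : y⁻¹ * y = 1 := inv_mul_cancel₀ hy
      rw [e1, e2, one_smul]
    rw [hSchur]
    -- determinant of the invertible corner
    have hdet1 : (y • (1 : Matrix (Fin (m + 1)) (Fin (m + 1)) ℝ)).det = y ^ (m + 1) := by
      simp [Matrix.det_smul]
    have hdet2 : (y⁻¹ • N).det = (y⁻¹) ^ m * N.det := by
      simp [Matrix.det_smul]
    -- eigen decomposition of N
    set μ : Fin m → ℝ := fun i => y ^ 2 - lam i * y - (if i = z then (m : ℝ) + 1 else 1) with hμ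
    set P : Matrix (Fin m) (Fin m) ℝ := Matrix.of fun k i => v i k with hP
    have hPtP : Pᵀ * P = 1 := by
      ext i j
      have := hortho i j
      simpa [Matrix.mul_apply, dotProduct, hP, Matrix.one_apply] using this
    have hNv : ∀ i, N.mulVec (v i) = μ i • v i := by
      intro i
      have hAv := heig i
      have hJi := hJv i
      funext k
      have expand : N.mulVec (v i) k
          = y ^ 2 * v i k - y * (lam i * v i k)
            - ((if i = z then (m : ℝ) else 0) * v i k + v i k) := by
        rw [hN]
        simp only [Matrix.sub_mulVec, Matrix.add_mulVec, Matrix.smul_mulVec,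
          Matrix.one_mulVec, hAv, hJi, Pi.sub_apply, Pi.add_apply, Pi.smul_apply, smul_eq_mul]
      rw [expand]
      by_cases hi : i = z <;> simp [hμ, hi] <;> ring
    have hNP : N * P = P * Matrix.diagonal μ := by
      ext k i
      have h := congrFun (hNv i) k
      have hl : (N * P) k i = N.mulVec (v i) k := by
        simp [Matrix.mul_apply, Matrix.mulVec, dotProduct, hP]
      rw [hl, h, Matrix.mul_diagonal]
      simp [hP, mul_comm]
    have hPdet : P.det * P.det = 1 := by
      have := congrArg Matrix.det hPtP
      rwa [Matrix.det_mul, Matrix.det_transpose, Matrix.det_one] at this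
    have hdetN : N.det = ∏ i, μ i := by
      have hD : Pᵀ * N * P = Matrix.diagonal μ := by
        rw [Matrix.mul_assoc, hNP, ← Matrix.mul_assoc, hPtP, Matrix.one_mul]
      have h3 := congrArg Matrix.det hD
      rw [Matrix.det_mul, Matrix.det_mul, Matrix.det_transpose, Matrix.det_diagonal] at h3
      calc N.det = (P.det * P.det) * N.det := by rw [hPdet, one_mul]
        _ = P.det * N.det * P.det := by ring
        _ = ∏ i, μ i := h3
    -- split the product
    have hsplit : ∏ i, μ i
        = (y ^ 2 - (r : ℝ) * y - ((m : ℝ) + 1)) *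
            ∏ i ∈ Finset.univ.erase z, (y ^ 2 - lam i * y - 1) := by
      rw [← Finset.mul_prod_erase Finset.univ μ (Finset.mem_univ z)]
      congr 1
      · simp [hμ, hlam0]
      · exact Finset.prod_congr rfl fun i hi => by
          simp [hμ, Finset.ne_of_mem_erase hi]
    have hpow : y ^ (m + 1) * (y⁻¹) ^ m = y := by
      rw [pow_succ, mul_comm (y ^ m) y, mul_assoc, ← mul_pow, mul_inv_cancel₀ hy, one_pow,
        mul_one]
    rw [hdet1, hdet2, hdetN, hsplit, ← mul_assoc, ← mul_assoc, hpow, mul_assoc, ← mul_assoc]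
  -- extend by continuity
  have hf : Continuous fun y : ℝ =>
      (y • (1 : Matrix (Fin (m + 1) ⊕ Fin m) (Fin (m + 1) ⊕ Fin m) ℝ) -
        Matrix.fromBlocks 0 (starB m) (starB m)ᵀ (H.adjMatrix ℝ)).det :=
    Continuous.matrix_det ((continuous_id.smul continuous_const).sub continuous_const)
  have hg : Continuous fun y : ℝ =>
      y * (y ^ 2 - (r : ℝ) * y - ((m : ℝ) + 1)) *
        ∏ i ∈ Finset.univ.erase (⟨0, hm⟩ : Fin m), (y ^ 2 - lam i * y - 1) := by
    apply Continuous.mul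
    · apply Continuous.mul
      · exact continuous_id
      · fun_prop
    · exact continuous_finset_prod _ fun i _ => by fun_prop
  have heq := Continuous.ext_on (dense_compl_singleton (0 : ℝ)) hf hg
    (fun y hy => key y (Set.mem_compl_singleton_iff.mp hy))
  exact congrFun heq x
end
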